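/- arXiv:1105.1196 — 8 statements merged into one kernel-verified Lean document; each statement's English description precedes it below -/
import Mathlib

section
/- Let p₂(x) = (1/4)·exp(−2|x|). For every Schwartz function u : ℝ → ℝ, one has ∫_ℝ u(x)² dx ≤ 4 ∫_ℝ (u(x) − u''(x)) · (p₂ * u)(x) dx. -/
/-!
`p₂ = e^{-2|x|}/4` is the Green's function of `4 - ∂ₓ²`, so `p₂ * (u - u'') = u - 3 p₂ * u`.
Convolution with the even kernel `p₂` is symmetric, hence
`∫ (u - u'') w = ∫ u (p₂ * (u - u'')) = ∫ u² - 3 ∫ u w`.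
Finally `2 u(x) u(y) ≤ u(x)² + u(y)²` gives Schur's bound `∫ u w ≤ ‖p₂‖₁ ∫ u² = ¼ ∫ u²`.
-/

open MeasureTheory Real Set Filter Topology

section ExpKernel

variable {a : ℝ}

lemma integral_exp_neg_mul_abs (ha : 0 < a) : ∫ x, exp (-a * |x|) = 2 / a := by
  rw [integral_comp_abs (f := fun x => exp (-a * x)), integral_exp_mul_Ioi (neg_lt_zero.2 ha) 0]
  field_simp
  simp

lemma integrable_exp_neg_mul_abs (ha : 0 < a) : Integrable fun x => exp (-a * |x|) :=
  .of_integral_ne_zero (by rw [integral_exp_neg_mul_abs ha]; positivity)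

lemma norm_exp_neg_mul_abs_le_one (ha : 0 ≤ a) (x : ℝ) : ‖exp (-a * |x|)‖ ≤ 1 := by
  rw [norm_of_nonneg (exp_pos _).le, exp_le_one_iff]
  nlinarith [abs_nonneg x]

lemma hasDerivAt_sub_mul_mul_exp {f f' f'' : ℝ → ℝ} {x : ℝ} (hf : HasDerivAt f (f' x) x)
    (hf' : HasDerivAt f' (f'' x) x) (c y : ℝ) :
    HasDerivAt (fun x => (f' x - c * f x) * exp (c * (x - y)))
      ((f'' x - c ^ 2 * f x) * exp (c * (x - y))) x := by
  have hexp : HasDerivAt (fun x => exp (c * (x - y))) (exp (c * (x - y)) * c) x :=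
    (((hasDerivAt_id x).sub_const y).const_mul c).exp.congr_deriv (by simp)
  exact ((hf'.fun_sub (hf.const_mul c)).mul hexp).congr_deriv (by ring)

/-- `e^{-a|x|} / (2a)` is the Green's function of `a² - d²/dx²`; the two half-line integrals are
computed from the primitive `(f' - c f) e^{c (x - y)}`, `c = ±a`. -/
theorem integral_sub_mul_exp_neg_mul_abs_sub {f f' f'' : ℝ → ℝ} (ha : 0 < a)
    (hf : ∀ x, HasDerivAt f (f' x) x) (hf' : ∀ x, HasDerivAt f' (f'' x) x)
    (hf₀ : Tendsto f (cocompact ℝ) (𝓝 0)) (hf'₀ : Tendsto f' (cocompact ℝ) (𝓝 0))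
    (hint : Integrable fun x => f'' x - a ^ 2 * f x) (y : ℝ) :
    ∫ x, (f'' x - a ^ 2 * f x) * exp (-a * |x - y|) = -2 * a * f y := by
  have hint_y : Integrable fun x => (f'' x - a ^ 2 * f x) * exp (-a * |x - y|) :=
    hint.mul_bdd (by fun_prop) (ae_of_all _ fun x => norm_exp_neg_mul_abs_le_one ha.le _)
  have hG₀ (c : ℝ) : Tendsto (fun x => f' x - c * f x) (cocompact ℝ) (𝓝 0) := by
    simpa using hf'₀.sub (hf₀.const_mul c)
  have hIic : ∫ x in Iic y, (f'' x - a ^ 2 * f x) * exp (-a * |x - y|) = f' y - a * f y := by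
    have hexp : Tendsto (fun x => exp (a * (x - y))) atBot (𝓝 0) := tendsto_exp_atBot.comp <|
      (tendsto_atBot_add_const_right _ (-y) tendsto_id).const_mul_atBot ha
    have hEq : EqOn (fun x => (f'' x - a ^ 2 * f x) * exp (-a * |x - y|))
        (fun x => (f'' x - a ^ 2 * f x) * exp (a * (x - y))) (Iic y) := fun x hx => by
      simp only [abs_of_nonpos (sub_nonpos.2 (mem_Iic.1 hx))]; ring_nf
    rw [setIntegral_congr_fun measurableSet_Iic hEq, integral_Iic_of_hasDerivAt_of_tendsto'
      (fun x _ => hasDerivAt_sub_mul_mul_exp (hf x) (hf' x) a y)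
      (hint_y.integrableOn.congr_fun hEq measurableSet_Iic)
      (by simpa using ((hG₀ a).mono_left atBot_le_cocompact).mul hexp)]
    simp
  have hIoi : ∫ x in Ioi y, (f'' x - a ^ 2 * f x) * exp (-a * |x - y|) = -(f' y + a * f y) := by
    have hexp : Tendsto (fun x => exp (-a * (x - y))) atTop (𝓝 0) := tendsto_exp_atBot.comp <|
      (tendsto_atTop_add_const_right _ (-y) tendsto_id).const_mul_atTop_of_neg (neg_lt_zero.2 ha)
    have hEq : EqOn (fun x => (f'' x - a ^ 2 * f x) * exp (-a * |x - y|))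
        (fun x => (f'' x - (-a) ^ 2 * f x) * exp (-a * (x - y))) (Ioi y) := fun x hx => by
      simp only [abs_of_pos (sub_pos.2 (mem_Ioi.1 hx)), neg_sq]
    rw [setIntegral_congr_fun measurableSet_Ioi hEq, integral_Ioi_of_hasDerivAt_of_tendsto'
      (fun x _ => hasDerivAt_sub_mul_mul_exp (hf x) (hf' x) (-a) y)
      (hint_y.integrableOn.congr_fun hEq measurableSet_Ioi)
      (by simpa using ((hG₀ (-a)).mono_left atTop_le_cocompact).mul hexp)]
    simp
  rw [← intervalIntegral.integral_Iic_add_Ioi hint_y.integrableOn hint_y.integrableOn, hIic,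
    hIoi]
  ring

end ExpKernel

structure IsEvenNonnegKernel (k : ℝ → ℝ) : Prop where
  continuous : Continuous k
  nonneg : ∀ x, 0 ≤ k x
  even : ∀ x, k (-x) = k x
  integrable : Integrable k

section Kernel

variable {k : ℝ → ℝ}

lemma integrable_sq_mul_kernel_sub_snd (hki : Integrable k) {g : ℝ → ℝ}
    (hg : Integrable fun x => g x ^ 2) :
    Integrable (fun p : ℝ × ℝ => g p.2 ^ 2 * k (p.1 - p.2)) (volume.prod volume) :=
  hg.convolution_integrand (ContinuousLinearMap.mul ℝ ℝ) hki

lemma integral_sq_mul_kernel_sub_snd (hki : Integrable k) {g : ℝ → ℝ}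
    (hg : Integrable fun x => g x ^ 2) :
    ∫ p : ℝ × ℝ, g p.2 ^ 2 * k (p.1 - p.2) ∂(volume.prod volume)
      = (∫ x, k x) * ∫ x, g x ^ 2 := by
  rw [integral_prod_symm _ (integrable_sq_mul_kernel_sub_snd hki hg)]
  simp_rw [integral_const_mul, integral_sub_right_eq_self, integral_mul_const]
  ring

lemma integrable_sq_mul_kernel_sub_fst (hk_even : ∀ x, k (-x) = k x) (hki : Integrable k)
    {f : ℝ → ℝ} (hf : Integrable fun x => f x ^ 2) :
    Integrable (fun p : ℝ × ℝ => f p.1 ^ 2 * k (p.1 - p.2)) (volume.prod volume) :=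
  (integrable_sq_mul_kernel_sub_snd hki hf).swap.congr <| ae_of_all _ fun p => by
    simp only [Function.comp_apply, Prod.fst_swap, Prod.snd_swap]
    rw [← neg_sub, hk_even]

lemma integral_sq_mul_kernel_sub_fst (hk_even : ∀ x, k (-x) = k x) (hki : Integrable k)
    {f : ℝ → ℝ} (hf : Integrable fun x => f x ^ 2) :
    ∫ p : ℝ × ℝ, f p.1 ^ 2 * k (p.1 - p.2) ∂(volume.prod volume)
      = (∫ x, k x) * ∫ x, f x ^ 2 := by
  rw [← integral_sq_mul_kernel_sub_snd hki hf,
    ← integral_prod_swap fun p : ℝ × ℝ => f p.1 ^ 2 * k (p.1 - p.2)]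
  congr 1 with p
  rw [Prod.fst_swap, Prod.snd_swap, ← neg_sub, hk_even]

/-- By AM-GM, `|f x| k (x - y) |g y| ≤ k (x - y) (f x ^ 2 + g y ^ 2) / 2`. -/
lemma integrable_mul_kernel_sub_mul (hk : IsEvenNonnegKernel k) {f g : ℝ → ℝ}
    (hf : MemLp f 2) (hg : MemLp g 2) :
    Integrable (fun p : ℝ × ℝ => f p.1 * (k (p.1 - p.2) * g p.2)) (volume.prod volume) := by
  refine (((integrable_sq_mul_kernel_sub_fst hk.even hk.integrable hf.integrable_sq).add
    (integrable_sq_mul_kernel_sub_snd hk.integrable hg.integrable_sq)).div_const 2).mono'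
    (hf.1.comp_fst.mul
      ((hk.continuous.comp continuous_sub).aestronglyMeasurable.mul hg.1.comp_snd))
    (ae_of_all _ fun p => ?_)
  have := hk.nonneg (p.1 - p.2)
  rw [Pi.add_apply, norm_mul, norm_mul, norm_of_nonneg this, Real.norm_eq_abs, Real.norm_eq_abs]
  nlinarith [sq_nonneg (|f p.1| - |g p.2|), sq_abs (f p.1), sq_abs (g p.2)]

lemma integrable_mul_integral_kernel_sub_mul (hk : IsEvenNonnegKernel k) {f g : ℝ → ℝ}
    (hf : MemLp f 2) (hg : MemLp g 2) : Integrable fun x => f x * ∫ y, k (x - y) * g y := by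
  simpa only [integral_const_mul] using (integrable_mul_kernel_sub_mul hk hf hg).integral_prod_left

theorem integral_mul_integral_kernel_sub_mul_comm (hk : IsEvenNonnegKernel k) {f g : ℝ → ℝ}
    (hf : MemLp f 2) (hg : MemLp g 2) :
    ∫ x, f x * ∫ y, k (x - y) * g y = ∫ y, g y * ∫ x, f x * k (x - y) :=
  calc ∫ x, f x * ∫ y, k (x - y) * g y = ∫ x, ∫ y, f x * (k (x - y) * g y) := by
        simp_rw [integral_const_mul]
    _ = ∫ y, ∫ x, f x * (k (x - y) * g y) :=
        integral_integral_swap (integrable_mul_kernel_sub_mul hk hf hg)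
    _ = ∫ y, g y * ∫ x, f x * k (x - y) := by
        congr 1 with y
        rw [← integral_const_mul]
        congr 1 with x
        ring

theorem integral_mul_integral_kernel_sub_mul_le (hk : IsEvenNonnegKernel k) {u : ℝ → ℝ}
    (hu : MemLp u 2) :
    ∫ x, u x * ∫ y, k (x - y) * u y ≤ (∫ x, k x) * ∫ x, u x ^ 2 := by
  have hint := integrable_mul_kernel_sub_mul hk hu hu
  have hfst := integrable_sq_mul_kernel_sub_fst hk.even hk.integrable hu.integrable_sq
  have hsnd := integrable_sq_mul_kernel_sub_snd hk.integrable hu.integrable_sq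
  calc ∫ x, u x * ∫ y, k (x - y) * u y
        = ∫ p : ℝ × ℝ, u p.1 * (k (p.1 - p.2) * u p.2) ∂(volume.prod volume) := by
        rw [integral_prod _ hint]
        simp_rw [integral_const_mul]
    _ ≤ ∫ p : ℝ × ℝ, (u p.1 ^ 2 * k (p.1 - p.2) + u p.2 ^ 2 * k (p.1 - p.2)) / 2
          ∂(volume.prod volume) :=
        integral_mono hint ((hfst.add hsnd).div_const 2) fun p => by
          nlinarith [mul_nonneg (hk.nonneg (p.1 - p.2)) (sq_nonneg (u p.1 - u p.2))]
    _ = (∫ x, k x) * ∫ x, u x ^ 2 := by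
        rw [integral_div, integral_add hfst hsnd,
          integral_sq_mul_kernel_sub_fst hk.even hk.integrable hu.integrable_sq,
          integral_sq_mul_kernel_sub_snd hk.integrable hu.integrable_sq]
        ring

end Kernel

section Schwartz

open SchwartzMap

variable {a : ℝ}

lemma isEvenNonnegKernel_exp_neg_mul_abs (ha : 0 < a) :
    IsEvenNonnegKernel fun x => exp (-a * |x|) where
  continuous := by fun_prop
  nonneg _ := (exp_pos _).le
  even _ := by rw [abs_neg]
  integrable := integrable_exp_neg_mul_abs ha

theorem integral_sub_deriv_deriv_mul_exp_neg_mul_abs_sub (u : 𝓢(ℝ, ℝ)) (ha : 0 < a)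
    (y : ℝ) :
    ∫ x, (u x - deriv (deriv u) x) * exp (-a * |x - y|)
      = 2 * a * u y + (1 - a ^ 2) * ∫ x, exp (-a * |y - x|) * u x := by
  have hu'' : Integrable fun x => deriv (deriv u) x - a ^ 2 * u x :=
    (derivCLM ℝ ℝ (derivCLM ℝ ℝ u)).integrable.sub (u.integrable.const_mul _)
  have hgreen := integral_sub_mul_exp_neg_mul_abs_sub (f' := deriv u) (f'' := deriv (deriv u))
    ha u.hasDerivAt (derivCLM ℝ ℝ u).hasDerivAt u.tendsto_cocompact
    (derivCLM ℝ ℝ u).tendsto_cocompact hu'' y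
  have hgreen_int : Integrable fun x => (deriv (deriv u) x - a ^ 2 * u x) * exp (-a * |x - y|) :=
    hu''.mul_bdd (by fun_prop) (ae_of_all _ fun x => norm_exp_neg_mul_abs_le_one ha.le _)
  have hconv_int : Integrable fun x => exp (-a * |y - x|) * u x :=
    u.integrable.bdd_mul (by fun_prop) (ae_of_all _ fun x => norm_exp_neg_mul_abs_le_one ha.le _)
  calc ∫ x, (u x - deriv (deriv u) x) * exp (-a * |x - y|)
      = ∫ x, (-((deriv (deriv u) x - a ^ 2 * u x) * exp (-a * |x - y|))
          + (1 - a ^ 2) * (exp (-a * |y - x|) * u x)) := by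
        congr 1 with x
        rw [abs_sub_comm]
        ring
    _ = 2 * a * u y + (1 - a ^ 2) * ∫ x, exp (-a * |y - x|) * u x := by
        rw [integral_add hgreen_int.fun_neg (hconv_int.const_mul _), integral_neg,
          integral_const_mul, hgreen]
        ring

theorem integral_sub_deriv_deriv_mul_integral_exp (u : 𝓢(ℝ, ℝ)) (ha : 0 < a) :
    ∫ x, (u x - deriv (deriv u) x) * ∫ y, exp (-a * |x - y|) * u y
      = 2 * a * (∫ x, u x ^ 2) + (1 - a ^ 2) * ∫ x, u x * ∫ y, exp (-a * |x - y|) * u y := by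
  have hk := isEvenNonnegKernel_exp_neg_mul_abs ha
  have hm : MemLp (fun x => u x - deriv (deriv u) x) 2 :=
    (u - derivCLM ℝ ℝ (derivCLM ℝ ℝ u)).memLp 2 volume
  rw [integral_mul_integral_kernel_sub_mul_comm hk hm (u.memLp 2)]
  simp_rw [integral_sub_deriv_deriv_mul_exp_neg_mul_abs_sub u ha]
  rw [← integral_const_mul (2 * a), ← integral_const_mul (1 - a ^ 2),
    ← integral_add ((u.memLp 2 volume).integrable_sq.const_mul _)
      ((integrable_mul_integral_kernel_sub_mul hk (u.memLp 2) (u.memLp 2)).const_mul _)]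
  congr 1 with y
  ring

end Schwartz

/-- Via Plancherel, the Fourier multiplier `(1 + ξ²)/(4 + ξ²)` is bounded below
by `1/4`: for a Schwartz function `u`, with `m = u - u''` and `w = p₂ * u`
(where `p₂(x) = (1/4)·exp(−2|x|)`), one has `∫ u² ≤ 4 ∫ m w`. -/
theorem stmt_2 (u : SchwartzMap ℝ ℝ)
    (p₂ : ℝ → ℝ) (hp : ∀ x, p₂ x = (1 / 4) * Real.exp (-2 * |x|))
    (w : ℝ → ℝ) (hw : ∀ x, w x = ∫ y, p₂ (x - y) * u y) :
    ∫ x, (u x) ^ 2 ≤ 4 * ∫ x, (u x - deriv (deriv (u : ℝ → ℝ)) x) * w x := by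
  have hw' (x : ℝ) : w x = 1 / 4 * ∫ y, exp (-2 * |x - y|) * u y := by
    rw [hw, ← integral_const_mul]
    simp_rw [hp, mul_assoc]
  have hid := integral_sub_deriv_deriv_mul_integral_exp u two_pos
  have hschur := integral_mul_integral_kernel_sub_mul_le
    (isEvenNonnegKernel_exp_neg_mul_abs two_pos) (u.memLp 2)
  rw [integral_exp_neg_mul_abs two_pos] at hschur
  simp_rw [hw', mul_left_comm _ (1 / 4 : ℝ)]
  rw [integral_const_mul]
  linarith
end

section
/- Let p₂(x) = (1/4)·exp(−2|x|). For every Schwartz function u : ℝ → ℝ, setting m = u − u'' and w = p₂ * u, one has ∫_ℝ w(x) · (m·u)'(x) dx = ∫_ℝ w'(x) u(x)² dx − ∫_ℝ w'(x) (u'(x))² dx. -/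
/-!
Split the kernel at `y = x`: `4 w = L + R` with `L x = ∫_{y ≤ x} e^{-2(x-y)} u y` and
`R x = ∫_{y > x} e^{-2(y-x)} u y`. From `L' = u - 2L` and `R' = 2R - u`, `w` is bounded with bounded
derivative `w' = (R - L) / 2` and `w'' = 4w - u`. Integrating by parts against Schwartz functions,
`∫ w (mu)' = -∫ w' u² + ∫ w' u u''` and `∫ w' u u'' = -∫ (4w - u) u u' - ∫ w' u'²`, and
`-∫ (4w - u) u u' = 2 ∫ w' u²` because `∫ w (u²)' = -∫ w' u²` and `∫ u² u' = 0`.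
-/

open MeasureTheory Real

open Set SchwartzMap
open scoped BoundedContinuousFunction

theorem hasDerivAt_integral_Iic {f : ℝ → ℝ} (hf : ∀ b, IntegrableOn f (Iic b))
    (hc : Continuous f) (x : ℝ) : HasDerivAt (fun x => ∫ y in Iic x, f y) (f x) x := by
  have hsplit : ∀ z, ∫ y in Iic z, f y = (∫ y in Iic 0, f y) + ∫ y in 0..z, f y := fun z => by
    rw [← intervalIntegral.integral_Iic_sub_Iic (hf 0) (hf z)]; ring
  refine ((intervalIntegral.integral_hasDerivAt_right ?_ (hc.stronglyMeasurableAtFilter _ _)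
    hc.continuousAt).const_add _).congr_of_eventuallyEq (.of_forall hsplit)
  exact hc.intervalIntegrable _ _

theorem abs_setIntegral_mul_le_integral_abs {α : Type*} [MeasurableSpace α] {μ : Measure α}
    {s : Set α} (hs : MeasurableSet s) {k u : α → ℝ} (hk : ∀ y ∈ s, |k y| ≤ 1)
    (hu : Integrable u μ) : |∫ y in s, k y * u y ∂μ| ≤ ∫ y, |u y| ∂μ := by
  rw [← Real.norm_eq_abs]
  refine (norm_integral_le_of_norm_le hu.abs.restrict ?_).trans
    (setIntegral_le_integral hu.abs (.of_forall fun y => abs_nonneg _))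
  filter_upwards [ae_restrict_mem hs] with y hy
  rw [norm_mul, Real.norm_eq_abs, Real.norm_eq_abs]
  exact mul_le_of_le_one_left (abs_nonneg _) (hk y hy)

section ExpConvolution

variable {a : ℝ} {u : ℝ → ℝ}

noncomputable def expConvIic (a : ℝ) (u : ℝ → ℝ) (x : ℝ) : ℝ :=
  ∫ y in Iic x, exp (-a * (x - y)) * u y

noncomputable def expConvIoi (a : ℝ) (u : ℝ → ℝ) (x : ℝ) : ℝ :=
  ∫ y in Ioi x, exp (-a * (y - x)) * u y

theorem abs_exp_neg_mul_le_one (ha : 0 ≤ a) {t : ℝ} (ht : 0 ≤ t) : |exp (-a * t)| ≤ 1 := by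
  rw [abs_of_pos (exp_pos _), exp_le_one_iff]
  nlinarith

theorem abs_expConvIic_le (ha : 0 ≤ a) (hu : Integrable u) (x : ℝ) :
    |expConvIic a u x| ≤ ∫ y, |u y| :=
  abs_setIntegral_mul_le_integral_abs measurableSet_Iic
    (fun _ hy => abs_exp_neg_mul_le_one ha (sub_nonneg.2 hy)) hu

theorem abs_expConvIoi_le (ha : 0 ≤ a) (hu : Integrable u) (x : ℝ) :
    |expConvIoi a u x| ≤ ∫ y, |u y| :=
  abs_setIntegral_mul_le_integral_abs measurableSet_Ioi
    (fun _ hy => abs_exp_neg_mul_le_one ha (sub_nonneg.2 (le_of_lt hy))) hu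

theorem integrable_exp_neg_mul_abs_sub_mul (ha : 0 ≤ a) (hu : Integrable u) (x : ℝ) :
    Integrable fun y => exp (-a * |x - y|) * u y :=
  hu.bdd_mul (by fun_prop) (.of_forall fun y => abs_exp_neg_mul_le_one ha (abs_nonneg _))

theorem integral_exp_neg_mul_abs_sub_mul (ha : 0 ≤ a) (hu : Integrable u) (x : ℝ) :
    ∫ y, exp (-a * |x - y|) * u y = expConvIic a u x + expConvIoi a u x := by
  have hi := integrable_exp_neg_mul_abs_sub_mul ha hu x
  rw [← intervalIntegral.integral_Iic_add_Ioi hi.integrableOn hi.integrableOn]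
  congr 1
  · refine setIntegral_congr_fun measurableSet_Iic fun y hy => ?_
    rw [abs_of_nonneg (sub_nonneg.2 hy)]
  · refine setIntegral_congr_fun measurableSet_Ioi fun y hy => ?_
    rw [abs_sub_comm, abs_of_pos (sub_pos.2 hy)]

theorem expConvIic_eq_exp_mul (x : ℝ) :
    expConvIic a u x = exp (-a * x) * ∫ y in Iic x, exp (a * y) * u y := by
  rw [expConvIic, ← integral_const_mul]
  congr 1; ext y
  rw [← mul_assoc, ← exp_add]; ring_nf

theorem integrableOn_exp_mul_mul_Iic (ha : 0 ≤ a) (hu : Integrable u) (x : ℝ) :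
    IntegrableOn (fun y => exp (a * y) * u y) (Iic x) := by
  refine hu.integrableOn.bdd_mul (c := exp (a * x)) (by fun_prop) ?_
  filter_upwards [ae_restrict_mem measurableSet_Iic] with y hy
  rw [Real.norm_eq_abs, abs_of_pos (exp_pos _), exp_le_exp]
  exact mul_le_mul_of_nonneg_left hy ha

theorem hasDerivAt_expConvIic (ha : 0 ≤ a) (hu : Integrable u) (hc : Continuous u) (x : ℝ) :
    HasDerivAt (expConvIic a u) (u x - a * expConvIic a u x) x := by
  have hF := hasDerivAt_integral_Iic (integrableOn_exp_mul_mul_Iic ha hu) (by fun_prop) x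
  have hE : HasDerivAt (fun x => exp (-a * x)) (exp (-a * x) * -a) x := by
    simpa using ((hasDerivAt_id x).const_mul (-a)).exp
  rw [show expConvIic a u = _ from funext expConvIic_eq_exp_mul]
  refine (hE.mul hF).congr_deriv ?_
  rw [← mul_assoc, ← exp_add]
  simp only [neg_mul, mul_neg, neg_add_cancel, exp_zero, one_mul]
  ring

theorem expConvIoi_eq_expConvIic_neg (x : ℝ) :
    expConvIoi a u x = expConvIic a (fun y => u (-y)) (-x) := by
  have h := integral_comp_neg_Iic (-x) fun y => exp (-a * (y - x)) * u y
  rw [neg_neg] at h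
  rw [expConvIoi, expConvIic, ← h]
  congr 1; ext y; ring_nf

theorem hasDerivAt_expConvIoi (ha : 0 ≤ a) (hu : Integrable u) (hc : Continuous u) (x : ℝ) :
    HasDerivAt (expConvIoi a u) (a * expConvIoi a u x - u x) x := by
  have h := (hasDerivAt_expConvIic ha hu.comp_neg (hc.comp continuous_neg) (-x)).comp x
    (hasDerivAt_neg x)
  rw [show expConvIoi a u = _ from funext expConvIoi_eq_expConvIic_neg]
  refine h.congr_deriv ?_
  simp only [neg_neg]
  ring

end ExpConvolution

theorem BoundedContinuousFunction.integrable_mul_schwartzMap {D : Type*} [NormedAddCommGroup D]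
    [NormedSpace ℝ D] [MeasurableSpace D] [BorelSpace D] [FiniteDimensional ℝ D] {μ : Measure D}
    [μ.HasTemperateGrowth] (f : D →ᵇ ℝ) (g : 𝓢(D, ℝ)) : Integrable (fun x => f x * g x) μ :=
  g.integrable.bdd_mul f.continuous.aestronglyMeasurable (.of_forall f.norm_coe_le_norm)

theorem integral_mul_deriv_schwartzMap (f f' : ℝ →ᵇ ℝ) (hf : ∀ x, HasDerivAt f (f' x) x)
    (g : 𝓢(ℝ, ℝ)) : ∫ x, f x * deriv g x = -∫ x, f' x * g x :=
  integral_mul_deriv_eq_deriv_mul_of_integrable (fun x _ => hf x) (fun x _ => g.hasDerivAt x)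
    (f.integrable_mul_schwartzMap (derivCLM ℝ ℝ g)) (f'.integrable_mul_schwartzMap g)
    (f.integrable_mul_schwartzMap g)

theorem two_mul_integral_mul_mul_deriv_schwartzMap (f f' : ℝ →ᵇ ℝ)
    (hf : ∀ x, HasDerivAt f (f' x) x) (u : 𝓢(ℝ, ℝ)) :
    2 * ∫ x, f x * u x * deriv u x = -∫ x, f' x * u x ^ 2 := by
  have h : ∫ x, f x * deriv (fun y => u y * u y) x = -∫ x, f' x * (u x * u x) :=
    integral_mul_deriv_schwartzMap f f' hf (pairing (ContinuousLinearMap.mul ℝ ℝ) u u)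
  simp only [← sq] at h
  rw [← h, ← integral_const_mul]
  congr 1; ext x
  rw [((u.hasDerivAt x).fun_pow 2).deriv]
  push_cast; ring

theorem integral_sq_mul_deriv_schwartzMap (u : 𝓢(ℝ, ℝ)) : ∫ x, u x ^ 2 * deriv u x = 0 := by
  have h : 2 * ∫ x, u x * u x * deriv u x = -∫ x, deriv u x * u x ^ 2 :=
    two_mul_integral_mul_mul_deriv_schwartzMap u.toBoundedContinuousFunction
      (derivCLM ℝ ℝ u).toBoundedContinuousFunction u.hasDerivAt u
  simp only [← sq, mul_comm (deriv u _)] at h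
  linarith

theorem integral_mul_mul_deriv_deriv_schwartzMap (u : 𝓢(ℝ, ℝ)) (k : ℝ) (f f' : ℝ →ᵇ ℝ)
    (hf : ∀ x, HasDerivAt f (f' x) x) (hf' : ∀ x, HasDerivAt f' (k * f x - u x) x) :
    ∫ x, f' x * u x * deriv (deriv u) x
      = k / 2 * (∫ x, f' x * u x ^ 2) - ∫ x, f' x * deriv u x ^ 2 := by
  let U := u.toBoundedContinuousFunction
  let u₁ := derivCLM ℝ ℝ u
  let U₁ := u₁.toBoundedContinuousFunction
  have hU : ∀ x, HasDerivAt U (U₁ x) x := u.hasDerivAt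
  have h : ∫ x, f' x * u x * deriv (deriv u) x
      = -∫ x, ((k * f x - u x) * u x + f' x * deriv u x) * deriv u x :=
    integral_mul_deriv_schwartzMap (f' * U) ((k • f - U) * U + f' * U₁)
      (fun x => ((hf' x).mul (hU x)).congr_deriv (by simp [U])) u₁
  have i₁ : Integrable fun x => f x * u x * deriv u x := (f * U).integrable_mul_schwartzMap u₁
  have i₂ : Integrable fun x => u x * u x * deriv u x := (U * U).integrable_mul_schwartzMap u₁
  have i₃ : Integrable fun x => f' x * deriv u x * deriv u x :=
    (f' * U₁).integrable_mul_schwartzMap u₁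
  have i₁₂ : Integrable fun x => k * (f x * u x * deriv u x) - u x * u x * deriv u x :=
    (i₁.const_mul k).sub i₂
  have hsplit : ∫ x, ((k * f x - u x) * u x + f' x * deriv u x) * deriv u x
      = k * (∫ x, f x * u x * deriv u x) - (∫ x, u x * u x * deriv u x)
        + ∫ x, f' x * deriv u x * deriv u x := by
    rw [← integral_const_mul, ← integral_sub (i₁.const_mul k) i₂, ← integral_add i₁₂ i₃]
    congr 1; ext x; ring
  have hsq : ∫ x, u x * u x * deriv u x = ∫ x, u x ^ 2 * deriv u x := by
    congr 1; ext x; ring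
  have hsq' : ∫ x, f' x * deriv u x * deriv u x = ∫ x, f' x * deriv u x ^ 2 := by
    congr 1; ext x; ring
  rw [h, hsplit, hsq, hsq', integral_sq_mul_deriv_schwartzMap]
  linear_combination (-k / 2) * two_mul_integral_mul_mul_deriv_schwartzMap f f' hf u

theorem integral_mul_deriv_momentum_mul (u : 𝓢(ℝ, ℝ)) (k : ℝ) {w w' : ℝ → ℝ}
    (hw : ∀ x, HasDerivAt w (w' x) x) (hw' : ∀ x, HasDerivAt w' (k * w x - u x) x)
    (hwb : ∃ C, ∀ x, |w x| ≤ C) (hw'b : ∃ C, ∀ x, |w' x| ≤ C) :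
    ∫ x, w x * deriv (fun y => (u y - deriv (deriv u) y) * u y) x
      = (k / 2 - 1) * (∫ x, w' x * u x ^ 2) - ∫ x, w' x * deriv u x ^ 2 := by
  obtain ⟨C, hC⟩ := hwb
  obtain ⟨C', hC'⟩ := hw'b
  let W : ℝ →ᵇ ℝ := .ofNormedAddCommGroup w
    (continuous_iff_continuousAt.2 fun x => (hw x).continuousAt) C hC
  let W' : ℝ →ᵇ ℝ := .ofNormedAddCommGroup w'
    (continuous_iff_continuousAt.2 fun x => (hw' x).continuousAt) C' hC'
  let U := u.toBoundedContinuousFunction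
  let u₂ := derivCLM ℝ ℝ (derivCLM ℝ ℝ u)
  have h : ∫ x, w x * deriv (fun y => (u y - deriv (deriv u) y) * u y) x
      = -∫ x, w' x * ((u x - deriv (deriv u) x) * u x) :=
    integral_mul_deriv_schwartzMap W W' hw (pairing (ContinuousLinearMap.mul ℝ ℝ) (u - u₂) u)
  have i₁ : Integrable fun x => w' x * u x * u x := (W' * U).integrable_mul_schwartzMap u
  have i₂ : Integrable fun x => w' x * u x * deriv (deriv u) x :=
    (W' * U).integrable_mul_schwartzMap u₂
  have hsplit : ∫ x, w' x * ((u x - deriv (deriv u) x) * u x)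
      = (∫ x, w' x * u x * u x) - ∫ x, w' x * u x * deriv (deriv u) x := by
    rw [← integral_sub i₁ i₂]; congr 1; ext x; ring
  have hsq : ∫ x, w' x * u x * u x = ∫ x, w' x * u x ^ 2 := by
    congr 1; ext x; ring
  have hX : ∫ x, w' x * u x * deriv (deriv u) x
      = k / 2 * (∫ x, w' x * u x ^ 2) - ∫ x, w' x * deriv u x ^ 2 :=
    integral_mul_mul_deriv_deriv_schwartzMap u k W W' hw hw'
  rw [h, hsplit, hsq, hX]
  ring

/-- Integration-by-parts identity: for a Schwartz function `u`, with
`m = u - u''` and `w = p₂ * u` (where `p₂(x) = (1/4)·exp(−2|x|)`, so that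
`4w - w'' = u`), one has `∫ w (m u)' = ∫ w' u² - ∫ w' (u')²`. -/
theorem stmt_4 (u : SchwartzMap ℝ ℝ)
    (p₂ : ℝ → ℝ) (hp : ∀ x, p₂ x = (1 / 4) * Real.exp (-2 * |x|))
    (w : ℝ → ℝ) (hw : ∀ x, w x = ∫ y, p₂ (x - y) * u y)
    (m : ℝ → ℝ) (hm : ∀ x, m x = u x - deriv (deriv (u : ℝ → ℝ)) x) :
    ∫ x, w x * deriv (fun y => m y * u y) x
      = (∫ x, deriv w x * (u x) ^ 2) - ∫ x, deriv w x * (deriv (u : ℝ → ℝ) x) ^ 2 := by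
  obtain rfl : m = fun y => u y - deriv (deriv u) y := funext hm
  set L := expConvIic 2 u
  set R := expConvIoi 2 u
  have hw_eq : ∀ x, w x = (L x + R x) / 4 := fun x => by
    simp only [hw, hp, mul_assoc, integral_const_mul]
    rw [integral_exp_neg_mul_abs_sub_mul zero_le_two u.integrable]; ring
  have hL := hasDerivAt_expConvIic zero_le_two u.integrable u.continuous
  have hR := hasDerivAt_expConvIoi zero_le_two u.integrable u.continuous
  have hw' : ∀ x, HasDerivAt w ((R x - L x) / 2) x := fun x =>
    ((((hL x).add (hR x)).div_const 4).congr_of_eventuallyEq (.of_forall hw_eq)).congr_deriv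
      (by ring)
  have hw'' : ∀ x, HasDerivAt (fun x => (R x - L x) / 2) (4 * w x - u x) x := fun x =>
    (((hR x).sub (hL x)).div_const 2).congr_deriv (by rw [hw_eq]; ring)
  have hbound : ∀ x, |w x| ≤ ∫ y, |u y| ∧ |(R x - L x) / 2| ≤ ∫ y, |u y| := fun x => by
    obtain ⟨hL₁, hL₂⟩ := abs_le.1 (abs_expConvIic_le zero_le_two u.integrable x)
    obtain ⟨hR₁, hR₂⟩ := abs_le.1 (abs_expConvIoi_le zero_le_two u.integrable x)
    rw [hw_eq, abs_le, abs_le]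
    refine ⟨⟨?_, ?_⟩, ?_, ?_⟩ <;> linarith
  rw [show deriv w = _ from funext fun x => (hw' x).deriv]
  convert integral_mul_deriv_momentum_mul u 4 hw' hw''
    ⟨_, fun x => (hbound x).1⟩ ⟨_, fun x => (hbound x).2⟩ using 2
  norm_num
end

section
/- Let p₂(x) = (1/4)·exp(−2|x|). For every Schwartz function u : ℝ → ℝ, setting m = u − u'' and w = p₂ * u, one has ∫_ℝ w(x) · (3 m(x) u'(x) + m'(x) u(x)) dx = 0. -/
/-!
Splitting the kernel at `y = x` gives
`w x = (e^{-2x} ∫_{-∞}^x e^{2y} u y dy + e^{2x} ∫_x^∞ e^{-2y} u y dy) / 4`,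
from which `w` and `w'` are bounded (by `‖u‖₁`) and `w'' = 4 w - u`. Using this relation,
`w (3 m u' + m' u)` is the derivative of `G = w' u u' - w (u'² + u u'') + u³ / 3`.
Both `G` and `G'` are bounded functions times Schwartz functions, hence integrable,
so `∫ G' = 0`.
-/

open MeasureTheory Real Set Filter
open scoped SchwartzMap

section

variable {E : Type*} [NormedAddCommGroup E] [NormedSpace ℝ E] [CompleteSpace E] {g : ℝ → E}

theorem hasDerivAt_setIntegral_Iic (hg : Continuous g) (hint : ∀ a, IntegrableOn g (Iic a))
    (x : ℝ) : HasDerivAt (fun t => ∫ y in Iic t, g y) (g x) x := by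
  have split : (fun t => ∫ y in Iic t, g y) = fun t => (∫ y in Iic 0, g y) + ∫ y in 0..t, g y :=
    funext fun t => eq_add_of_sub_eq' (intervalIntegral.integral_Iic_sub_Iic (hint 0) (hint t))
  rw [split]
  exact (hg.integral_hasStrictDerivAt 0 x).hasDerivAt.const_add _

theorem hasDerivAt_setIntegral_Ioi (hg : Continuous g) (hint : ∀ a, IntegrableOn g (Ioi a))
    (x : ℝ) : HasDerivAt (fun t => ∫ y in Ioi t, g y) (-g x) x := by
  have split : (fun t => ∫ y in Ioi t, g y) = fun t => -(∫ y in 0..t, g y) + ∫ y in Ioi 0, g y :=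
    funext fun t => by
      rw [← intervalIntegral.integral_symm,
        intervalIntegral.integral_interval_add_Ioi (hint t) (hint 0)]
  rw [split]
  exact (hg.integral_hasStrictDerivAt 0 x).hasDerivAt.neg.add_const _

end

theorem hasDerivAt_exp_const_mul (c x : ℝ) :
    HasDerivAt (fun t => exp (c * t)) (exp (c * x) * c) x := by
  simpa using ((hasDerivAt_id x).const_mul c).exp

theorem SchwartzMap.integrable_mul {D : Type*} [NormedAddCommGroup D] [NormedSpace ℝ D]
    [MeasurableSpace D] [BorelSpace D] [SecondCountableTopology D] {μ : Measure D}
    [μ.HasTemperateGrowth] (f g : 𝓢(D, ℝ)) : Integrable (fun x => f x * g x) μ :=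
  (SchwartzMap.pairing (ContinuousLinearMap.mul ℝ ℝ) f g).integrable

namespace DegasperisProcesi

variable {u : ℝ → ℝ}

noncomputable def expIntegralIic (u : ℝ → ℝ) (x : ℝ) : ℝ := ∫ y in Iic x, exp (2 * y) * u y

noncomputable def expIntegralIoi (u : ℝ → ℝ) (x : ℝ) : ℝ := ∫ y in Ioi x, exp (-2 * y) * u y

noncomputable def resolvent (u : ℝ → ℝ) (x : ℝ) : ℝ :=
  (exp (-2 * x) * expIntegralIic u x + exp (2 * x) * expIntegralIoi u x) / 4

noncomputable def resolventDeriv (u : ℝ → ℝ) (x : ℝ) : ℝ :=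
  (exp (2 * x) * expIntegralIoi u x - exp (-2 * x) * expIntegralIic u x) / 2

theorem integrableOn_Iic_exp_mul (hu : Integrable u) (a : ℝ) :
    IntegrableOn (fun y => exp (2 * y) * u y) (Iic a) := by
  refine hu.integrableOn.bdd_mul (c := exp (2 * a)) (by fun_prop) ?_
  refine (ae_restrict_iff' measurableSet_Iic).2 (Eventually.of_forall fun y (hy : y ≤ a) => ?_)
  rw [norm_of_nonneg (exp_pos _).le]
  exact exp_le_exp.2 (by linarith)

theorem integrableOn_Ioi_exp_neg_mul (hu : Integrable u) (a : ℝ) :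
    IntegrableOn (fun y => exp (-2 * y) * u y) (Ioi a) := by
  refine hu.integrableOn.bdd_mul (c := exp (-2 * a)) (by fun_prop) ?_
  refine (ae_restrict_iff' measurableSet_Ioi).2 (Eventually.of_forall fun y (hy : a < y) => ?_)
  rw [norm_of_nonneg (exp_pos _).le]
  exact exp_le_exp.2 (by linarith)

theorem integral_exp_neg_abs_mul_eq_resolvent (hu : Integrable u) (x : ℝ) :
    ∫ y, 1 / 4 * exp (-2 * |x - y|) * u y = resolvent u x := by
  have hint : Integrable fun y => 1 / 4 * exp (-2 * |x - y|) * u y := by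
    refine hu.bdd_mul (c := 1 / 4) (by fun_prop) (Eventually.of_forall fun y => ?_)
    rw [norm_of_nonneg (by positivity)]
    have : exp (-2 * |x - y|) ≤ 1 := exp_le_one_iff.2 (by linarith [abs_nonneg (x - y)])
    linarith
  have left : ∫ y in Iic x, 1 / 4 * exp (-2 * |x - y|) * u y
      = exp (-2 * x) * expIntegralIic u x / 4 := by
    rw [expIntegralIic, mul_div_right_comm, ← integral_const_mul]
    refine setIntegral_congr_fun measurableSet_Iic fun y (hy : y ≤ x) => ?_
    rw [abs_of_nonneg (by linarith), show -2 * (x - y) = -2 * x + 2 * y by ring, exp_add]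
    ring
  have right : ∫ y in Ioi x, 1 / 4 * exp (-2 * |x - y|) * u y
      = exp (2 * x) * expIntegralIoi u x / 4 := by
    rw [expIntegralIoi, mul_div_right_comm, ← integral_const_mul]
    refine setIntegral_congr_fun measurableSet_Ioi fun y (hy : x < y) => ?_
    rw [abs_of_neg (by linarith), show -2 * -(x - y) = 2 * x + -2 * y by ring, exp_add]
    ring
  rw [← setIntegral_univ, ← Iic_union_Ioi (a := x),
    setIntegral_union (Iic_disjoint_Ioi le_rfl) measurableSet_Ioi hint.integrableOn
      hint.integrableOn, left, right, resolvent]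
  ring

theorem hasDerivAt_expIntegralIic (hu : Integrable u) (hc : Continuous u) (x : ℝ) :
    HasDerivAt (expIntegralIic u) (exp (2 * x) * u x) x :=
  hasDerivAt_setIntegral_Iic (by fun_prop) (integrableOn_Iic_exp_mul hu) x

theorem hasDerivAt_expIntegralIoi (hu : Integrable u) (hc : Continuous u) (x : ℝ) :
    HasDerivAt (expIntegralIoi u) (-(exp (-2 * x) * u x)) x :=
  hasDerivAt_setIntegral_Ioi (by fun_prop) (integrableOn_Ioi_exp_neg_mul hu) x

theorem hasDerivAt_resolvent (hu : Integrable u) (hc : Continuous u) (x : ℝ) :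
    HasDerivAt (resolvent u) (resolventDeriv u x) x := by
  have := (((hasDerivAt_exp_const_mul (-2) x).mul (hasDerivAt_expIntegralIic hu hc x)).add
    ((hasDerivAt_exp_const_mul 2 x).mul (hasDerivAt_expIntegralIoi hu hc x))).div_const 4
  refine this.congr_deriv ?_
  rw [resolventDeriv]; ring

theorem hasDerivAt_resolventDeriv (hu : Integrable u) (hc : Continuous u) (x : ℝ) :
    HasDerivAt (resolventDeriv u) (4 * resolvent u x - u x) x := by
  have := (((hasDerivAt_exp_const_mul 2 x).mul (hasDerivAt_expIntegralIoi hu hc x)).sub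
    ((hasDerivAt_exp_const_mul (-2) x).mul (hasDerivAt_expIntegralIic hu hc x))).div_const 2
  refine this.congr_deriv ?_
  have : exp (2 * x) * exp (-2 * x) = 1 := by rw [← exp_add]; simp
  rw [resolvent]; linear_combination (-u x) * this

theorem norm_exp_neg_mul_expIntegralIic_le (hu : Integrable u) (x : ℝ) :
    ‖exp (-2 * x) * expIntegralIic u x‖ ≤ ∫ y, ‖u y‖ := by
  rw [expIntegralIic, ← integral_const_mul]
  refine (norm_integral_le_of_norm_le hu.norm.integrableOn ?_).trans
    (setIntegral_le_integral hu.norm (Eventually.of_forall fun y => norm_nonneg _))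
  refine (ae_restrict_iff' measurableSet_Iic).2 (Eventually.of_forall fun y (hy : y ≤ x) => ?_)
  rw [← mul_assoc, ← exp_add, norm_mul, norm_of_nonneg (exp_pos _).le]
  exact mul_le_of_le_one_left (norm_nonneg _) (exp_le_one_iff.2 (by linarith))

theorem norm_exp_mul_expIntegralIoi_le (hu : Integrable u) (x : ℝ) :
    ‖exp (2 * x) * expIntegralIoi u x‖ ≤ ∫ y, ‖u y‖ := by
  rw [expIntegralIoi, ← integral_const_mul]
  refine (norm_integral_le_of_norm_le hu.norm.integrableOn ?_).trans
    (setIntegral_le_integral hu.norm (Eventually.of_forall fun y => norm_nonneg _))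
  refine (ae_restrict_iff' measurableSet_Ioi).2 (Eventually.of_forall fun y (hy : x < y) => ?_)
  rw [← mul_assoc, ← exp_add, norm_mul, norm_of_nonneg (exp_pos _).le]
  exact mul_le_of_le_one_left (norm_nonneg _) (exp_le_one_iff.2 (by linarith))

theorem norm_resolvent_le (hu : Integrable u) (x : ℝ) : ‖resolvent u x‖ ≤ ∫ y, ‖u y‖ := by
  have := norm_add_le (exp (-2 * x) * expIntegralIic u x) (exp (2 * x) * expIntegralIoi u x)
  rw [resolvent, norm_div, Real.norm_ofNat, div_le_iff₀ (by norm_num)]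
  linarith [norm_exp_neg_mul_expIntegralIic_le hu x, norm_exp_mul_expIntegralIoi_le hu x,
    (integral_nonneg fun y => norm_nonneg (u y) : 0 ≤ ∫ y, ‖u y‖)]

theorem norm_resolventDeriv_le (hu : Integrable u) (x : ℝ) :
    ‖resolventDeriv u x‖ ≤ ∫ y, ‖u y‖ := by
  have := norm_sub_le (exp (2 * x) * expIntegralIoi u x) (exp (-2 * x) * expIntegralIic u x)
  rw [resolventDeriv, norm_div, Real.norm_ofNat, div_le_iff₀ (by norm_num)]
  linarith [norm_exp_neg_mul_expIntegralIic_le hu x, norm_exp_mul_expIntegralIoi_le hu x]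

theorem integral_mul_quadratic_eq_zero (u : 𝓢(ℝ, ℝ)) {w w' : ℝ → ℝ} {C C' : ℝ}
    (hw : ∀ x, HasDerivAt w (w' x) x) (hw' : ∀ x, HasDerivAt w' (4 * w x - u x) x)
    (hC : ∀ x, ‖w x‖ ≤ C) (hC' : ∀ x, ‖w' x‖ ≤ C') :
    ∫ x, w x * (3 * (u x - deriv (deriv u) x) * deriv u x
      + deriv (fun y => u y - deriv (deriv u) y) x * u x) = 0 := by
  set u₁ := SchwartzMap.derivCLM ℝ ℝ u
  set u₂ := SchwartzMap.derivCLM ℝ ℝ u₁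
  set u₃ := SchwartzMap.derivCLM ℝ ℝ u₂
  have hu₁ : deriv u = u₁ := rfl
  have hu₂ : deriv (deriv u) = u₂ := rfl
  have hm' : deriv (fun y => u y - u₂ y) = fun x => u₁ x - u₃ x :=
    funext fun x => ((u.hasDerivAt x).sub (u₂.hasDerivAt x)).deriv
  rw [hu₂, hu₁, hm']
  have hwm : AEStronglyMeasurable w :=
    (continuous_iff_continuousAt.2 fun x => (hw x).continuousAt).aestronglyMeasurable
  have hwm' : AEStronglyMeasurable w' :=
    (continuous_iff_continuousAt.2 fun x => (hw' x).continuousAt).aestronglyMeasurable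
  set G : ℝ → ℝ := fun x =>
    w' x * (u x * u₁ x) - w x * (u₁ x * u₁ x + u x * u₂ x) + u x * u x * u x / 3
  have hG : ∀ x, HasDerivAt G (w x * (3 * (u x - u₂ x) * u₁ x + (u₁ x - u₃ x) * u x)) x := by
    intro x
    have d₀ : HasDerivAt u (u₁ x) x := u.hasDerivAt x
    have d₁ : HasDerivAt u₁ (u₂ x) x := u₁.hasDerivAt x
    have d₂ : HasDerivAt u₂ (u₃ x) x := u₂.hasDerivAt x
    refine ((((hw' x).mul (d₀.mul d₁)).sub ((hw x).mul ((d₁.mul d₁).add (d₀.mul d₂)))).add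
      (((d₀.mul d₀).mul d₀).div_const 3)).congr_deriv ?_
    simp only [Pi.mul_apply, Pi.add_apply]
    ring
  have hGint : Integrable G :=
    (((SchwartzMap.integrable_mul u u₁).bdd_mul hwm' (Eventually.of_forall hC')).sub
      (((SchwartzMap.integrable_mul u₁ u₁).add (SchwartzMap.integrable_mul u u₂)).bdd_mul hwm
        (Eventually.of_forall hC))).add
      (((SchwartzMap.integrable_mul u u).mul_bdd u.continuous.aestronglyMeasurable
        (Eventually.of_forall (SchwartzMap.norm_le_seminorm ℝ u))).div_const 3)
  have hG'int : Integrable fun x => w x * (3 * (u x - u₂ x) * u₁ x + (u₁ x - u₃ x) * u x) := by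
    refine Integrable.bdd_mul ?_ hwm (Eventually.of_forall hC)
    refine (((SchwartzMap.integrable_mul (u - u₂) u₁).const_mul 3).add
      (SchwartzMap.integrable_mul (u₁ - u₃) u)).congr (Eventually.of_forall fun x => ?_)
    simp only [Pi.add_apply, sub_apply]
    ring
  exact integral_eq_zero_of_hasDerivAt_of_integrable hG hG'int hGint

end DegasperisProcesi

/-- The quadratic part `3 m u' + m' u` of the Degasperis–Procesi equation does
not contribute to `d/dt ∫ m w dx`: for a Schwartz function `u`, with
`m = u - u''` and `w = p₂ * u` (where `p₂(x) = (1/4)·exp(−2|x|)`), one has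
`∫ w (3 m u' + m' u) = 0`. -/
theorem stmt_6 (u : SchwartzMap ℝ ℝ)
    (p₂ : ℝ → ℝ) (hp : ∀ x, p₂ x = (1 / 4) * Real.exp (-2 * |x|))
    (w : ℝ → ℝ) (hw : ∀ x, w x = ∫ y, p₂ (x - y) * u y)
    (m : ℝ → ℝ) (hm : ∀ x, m x = u x - deriv (deriv (u : ℝ → ℝ)) x) :
    ∫ x, w x * (3 * m x * deriv (u : ℝ → ℝ) x + deriv m x * u x) = 0 := by
  have hw_eq : w = DegasperisProcesi.resolvent u := funext fun x => by
    rw [hw x, ← DegasperisProcesi.integral_exp_neg_abs_mul_eq_resolvent u.integrable x]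
    simp only [hp]
  have hm_eq : m = fun y => u y - deriv (deriv (u : ℝ → ℝ)) y := funext hm
  subst hw_eq hm_eq
  exact DegasperisProcesi.integral_mul_quadratic_eq_zero u
    (DegasperisProcesi.hasDerivAt_resolvent u.integrable u.continuous)
    (DegasperisProcesi.hasDerivAt_resolventDeriv u.integrable u.continuous)
    (DegasperisProcesi.norm_resolvent_le u.integrable)
    (DegasperisProcesi.norm_resolventDeriv_le u.integrable)
end

section
/- Let T > 0, let u : [0,T) × ℝ → ℝ be continuously differentiable, and let ρ : [0,T) × ℝ → ℝ be continuously differentiable and satisfy the transport equation ∂ₜρ + u ∂ₓρ + 2 (∂ₓu) ρ = 0 on [0,T) × ℝ. Let q : [0,T) × ℝ → ℝ be continuously differentiable with ∂ₜq(t,x) = u(t, q(t,x)) and q(0,x) = x. Then for all (t,x) ∈ [0,T) × ℝ, ρ(t, q(t,x)) · (∂ₓq(t,x))² = ρ(0,x). -/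
/-!
Along the characteristic `s ↦ q(s, x)` put `a(s) = ρ(s, q(s, x))`, `w(s) = ∂ₓq(s, x)` and
`c(s) = ∂ₓu(s, q(s, x))`. The transport equation gives `a' = -2 c a` and the variational
equation of the flow gives `w' = c w`, so `a w²` has zero derivative.

Since `q` is only `C¹`, the variational equation cannot be obtained by exchanging `∂ₜ` and `∂ₓ`.
Instead one differentiates the integral form `q(t, y) = y + ∫₀ᵗ u(s, q(s, y)) ds` in `y` under
the integral sign, which shows that `w` agrees on `[0, T)` with `1 + ∫₀ᵗ c w`, a `C¹` function.
-/

open Function MeasureTheory Set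

section Partials

variable {E : Type*} [NormedAddCommGroup E] [NormedSpace ℝ E] {f : ℝ → ℝ → E}

theorem hasDerivAt_fst_of_differentiableAt_uncurry {t x : ℝ}
    (hf : DifferentiableAt ℝ (uncurry f) (t, x)) :
    HasDerivAt (fun s => f s x) (fderiv ℝ (uncurry f) (t, x) (1, 0)) t :=
  hf.hasFDerivAt.comp_hasDerivAt (f := fun s => (s, x)) t
    ((hasDerivAt_id t).prodMk (hasDerivAt_const t x))

theorem hasDerivAt_snd_of_differentiableAt_uncurry {t x : ℝ}
    (hf : DifferentiableAt ℝ (uncurry f) (t, x)) :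
    HasDerivAt (f t) (fderiv ℝ (uncurry f) (t, x) (0, 1)) x :=
  hf.hasFDerivAt.comp_hasDerivAt (f := fun y => (t, y)) x
    ((hasDerivAt_const x t).prodMk (hasDerivAt_id x))

theorem continuous_deriv_snd_of_contDiff_uncurry (hf : ContDiff ℝ 1 (uncurry f)) :
    Continuous fun p : ℝ × ℝ => deriv (f p.1) p.2 := by
  have hdiff := hf.differentiable one_ne_zero
  simp_rw [fun p : ℝ × ℝ => (hasDerivAt_snd_of_differentiableAt_uncurry (hdiff p)).deriv]
  exact (hf.continuous_fderiv one_ne_zero).clm_apply continuous_const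

theorem hasDerivAt_uncurry_comp_graph {γ : ℝ → ℝ} {γ' s : ℝ}
    (hf : DifferentiableAt ℝ (uncurry f) (s, γ s)) (hγ : HasDerivAt γ γ' s) :
    HasDerivAt (fun r => f r (γ r))
      (deriv (fun r => f r (γ s)) s + γ' • deriv (f s) (γ s)) s := by
  have h := hf.hasFDerivAt.comp_hasDerivAt (f := fun r => (r, γ r)) s
    ((hasDerivAt_id s).prodMk hγ)
  rwa [show ((1 : ℝ), γ') = (1, 0) + γ' • (0, 1) by simp, map_add, map_smul,
    ← (hasDerivAt_fst_of_differentiableAt_uncurry hf).deriv,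
    ← (hasDerivAt_snd_of_differentiableAt_uncurry hf).deriv] at h

theorem hasDerivAt_intervalIntegral_of_contDiff_uncurry [CompleteSpace E]
    (hf : ContDiff ℝ 1 (uncurry f)) (a b x : ℝ) :
    HasDerivAt (fun y => ∫ s in a..b, f s y) (∫ s in a..b, deriv (f s) x) x := by
  have hcont : ∀ y, Continuous fun s => f s y := fun y =>
    hf.continuous.comp (continuous_id.prodMk continuous_const)
  have hcont' := continuous_deriv_snd_of_contDiff_uncurry hf
  obtain ⟨M, hM⟩ := (isCompact_uIcc.prod (isCompact_closedBall x 1)).exists_bound_of_continuousOn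
    hcont'.continuousOn
  refine (intervalIntegral.hasDerivAt_integral_of_dominated_loc_of_deriv_le
    (F' := fun y s => deriv (f s) y) (bound := fun _ => M)
    (Metric.ball_mem_nhds x one_pos) ?_ ((hcont x).intervalIntegrable a b)
    (hcont'.comp (continuous_id.prodMk continuous_const)).aestronglyMeasurable ?_
    intervalIntegrable_const ?_).2
  · exact .of_forall fun y => (hcont y).aestronglyMeasurable
  · refine .of_forall fun s hs y hy => hM (s, y) ⟨uIoc_subset_uIcc hs, ?_⟩
    exact Metric.ball_subset_closedBall hy
  · exact .of_forall fun s _ y _ => (hasDerivAt_snd_of_differentiableAt_uncurry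
      (hf.differentiable one_ne_zero (s, y))).differentiableAt.hasDerivAt

end Partials

theorem deriv_flow_eq_one_add_integral {u q : ℝ → ℝ → ℝ} {t : ℝ}
    (hu : ContDiff ℝ 1 (uncurry u)) (hq : ContDiff ℝ 1 (uncurry q))
    (hode : ∀ s ∈ uIcc 0 t, ∀ y, HasDerivAt (fun r => q r y) (u s (q s y)) s)
    (hq0 : ∀ y, q 0 y = y) (x : ℝ) :
    deriv (q t) x = 1 + ∫ s in (0 : ℝ)..t, deriv (u s) (q s x) * deriv (q s) x := by
  have hF : ContDiff ℝ 1 (uncurry fun s y => u s (q s y)) := hu.comp (contDiff_fst.prodMk hq)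
  have hq_eq : q t = fun y => y + ∫ s in (0 : ℝ)..t, u s (q s y) := by
    ext y
    have hint : IntervalIntegrable (fun s => u s (q s y)) volume 0 t :=
      (hF.continuous.comp (continuous_id.prodMk continuous_const)).intervalIntegrable 0 t
    rw [intervalIntegral.integral_eq_sub_of_hasDerivAt (hode · · y) hint, hq0]
    ring
  have hchain : ∀ s, deriv (fun y => u s (q s y)) x = deriv (u s) (q s x) * deriv (q s) x :=
    fun s => deriv_comp (h₂ := u s) x
      (hasDerivAt_snd_of_differentiableAt_uncurry
        (hu.differentiable one_ne_zero _)).differentiableAt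
      (hasDerivAt_snd_of_differentiableAt_uncurry
        (hq.differentiable one_ne_zero _)).differentiableAt
  rw [hq_eq]
  refine ((hasDerivAt_id' x).add
    (hasDerivAt_intervalIntegral_of_contDiff_uncurry hF 0 t x)).deriv.trans ?_
  simp only [hchain]

theorem mul_pow_eq_of_hasDerivAt {a w c : ℝ → ℝ} {t₀ t₁ : ℝ} (n : ℕ)
    (ha : ∀ s ∈ uIcc t₀ t₁, HasDerivAt a (-n * c s * a s) s)
    (hw : ∀ s ∈ uIcc t₀ t₁, HasDerivAt w (c s * w s) s) :
    a t₁ * w t₁ ^ n = a t₀ * w t₀ ^ n := by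
  have hzero : ∀ s ∈ uIcc t₀ t₁, HasDerivAt (fun r => a r * w r ^ n) 0 s := fun s hs =>
    ((ha s hs).mul ((hw s hs).pow n)).congr_deriv (by
      rcases n with _ | n
      · simp
      · simp only [Pi.pow_apply, Nat.cast_succ, Nat.add_sub_cancel, pow_succ]
        ring)
  have := intervalIntegral.integral_eq_sub_of_hasDerivAt hzero intervalIntegrable_const
  simp only [intervalIntegral.integral_zero] at this
  linarith

theorem stmt_9_general (T : ℝ)
    (u ρ q : ℝ → ℝ → ℝ)
    (hu : ContDiff ℝ 1 (Function.uncurry u))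
    (hρ : ContDiff ℝ 1 (Function.uncurry ρ))
    (hq : ContDiff ℝ 1 (Function.uncurry q))
    (htransport : ∀ t ∈ Set.Ico (0 : ℝ) T, ∀ x : ℝ,
      deriv (fun s => ρ s x) t + u t x * deriv (ρ t) x
        + 2 * deriv (u t) x * ρ t x = 0)
    (hode : ∀ t ∈ Set.Ico (0 : ℝ) T, ∀ x : ℝ,
      deriv (fun s => q s x) t = u t (q t x))
    (hq0 : ∀ x : ℝ, q 0 x = x) :
    ∀ t ∈ Set.Ico (0 : ℝ) T, ∀ x : ℝ,
      ρ t (q t x) * (deriv (q t) x) ^ 2 = ρ 0 x := by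
  have hsub : ∀ s ∈ Ico 0 T, uIcc 0 s ⊆ Ico 0 T := fun s hs => by
    rw [uIcc_of_le hs.1]; exact Icc_subset_Ico_right hs.2
  have hflow : ∀ s ∈ Ico 0 T, ∀ y, HasDerivAt (fun r => q r y) (u s (q s y)) s := fun s hs y =>
    hode s hs y ▸ (hasDerivAt_fst_of_differentiableAt_uncurry
      (hq.differentiable one_ne_zero (s, y))).differentiableAt.hasDerivAt
  intro t ht x
  set c : ℝ → ℝ := fun s => deriv (u s) (q s x)
  set w : ℝ → ℝ := fun s => 1 + ∫ r in (0 : ℝ)..s, c r * deriv (q r) x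
  have hw_eq : ∀ s ∈ Ico 0 T, deriv (q s) x = w s := fun s hs =>
    deriv_flow_eq_one_add_integral hu hq (fun r hr => hflow r (hsub s hs hr)) hq0 x
  have hw : ∀ s ∈ Ico 0 T, HasDerivAt w (c s * w s) s := by
    have hcont : Continuous fun r => c r * deriv (q r) x :=
      ((continuous_deriv_snd_of_contDiff_uncurry hu).comp (continuous_id.prodMk
        (hq.continuous.comp (continuous_id.prodMk continuous_const)))).mul
      ((continuous_deriv_snd_of_contDiff_uncurry hq).comp (continuous_id.prodMk continuous_const))
    exact fun s hs => hw_eq s hs ▸ ((hcont.integral_hasStrictDerivAt 0 s).hasDerivAt.const_add 1)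
  have hρ_char : ∀ s ∈ Ico 0 T,
      HasDerivAt (fun r => ρ r (q r x)) (-(2 : ℕ) * c s * ρ s (q s x)) s := fun s hs =>
    (hasDerivAt_uncurry_comp_graph (hρ.differentiable one_ne_zero _) (hflow s hs x)).congr_deriv
      (by have := htransport s hs (q s x); simp only [c, smul_eq_mul]; push_cast; linarith)
  have hconserved := mul_pow_eq_of_hasDerivAt 2 (fun s hs => hρ_char s (hsub t ht hs))
    (fun s hs => hw s (hsub t ht hs))
  rw [hw_eq t ht]
  simpa [w, hq0] using hconserved

/-- Conservation of `ρ qₓ²` along characteristics: if `ρ` solves the transport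
equation `∂ₜρ + u ∂ₓρ + 2 (∂ₓu) ρ = 0` and `q` is the flow of `u`, then
`ρ(t, q(t,x)) (∂ₓq(t,x))² = ρ(0,x)` for all `t ∈ [0,T)` and `x ∈ ℝ`. -/
theorem stmt_9 (T : ℝ) (hT : 0 < T)
    (u ρ q : ℝ → ℝ → ℝ)
    (hu : ContDiff ℝ 1 (Function.uncurry u))
    (hρ : ContDiff ℝ 1 (Function.uncurry ρ))
    (hq : ContDiff ℝ 1 (Function.uncurry q))
    (htransport : ∀ t ∈ Set.Ico (0 : ℝ) T, ∀ x : ℝ,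
      deriv (fun s => ρ s x) t + u t x * deriv (ρ t) x
        + 2 * deriv (u t) x * ρ t x = 0)
    (hode : ∀ t ∈ Set.Ico (0 : ℝ) T, ∀ x : ℝ,
      deriv (fun s => q s x) t = u t (q t x))
    (hq0 : ∀ x : ℝ, q 0 x = x) :
    ∀ t ∈ Set.Ico (0 : ℝ) T, ∀ x : ℝ,
      ρ t (q t x) * (deriv (q t) x) ^ 2 = ρ 0 x :=
  stmt_9_general T u ρ q hu hρ hq htransport hode hq0
end

section
/- Let T > 0, M > 0, let u : [0,T) × ℝ → ℝ be continuously differentiable with ∂ₓu(t,x) ≥ −M for all (t,x) ∈ [0,T) × ℝ, and let ρ : [0,T) × ℝ → ℝ be continuously differentiable and satisfy ∂ₜρ + u ∂ₓρ + 2 (∂ₓu) ρ = 0 on [0,T) × ℝ. Let q : [0,T) × ℝ → ℝ be continuously differentiable with ∂ₜq(t,x) = u(t, q(t,x)), q(0,x) = x, and suppose that for each t ∈ [0,T) the map q(t,·) : ℝ → ℝ is surjective. Then for every t ∈ [0,T), sup_{x ∈ ℝ} |ρ(t,x)| ≤ e^{2Mt} · sup_{x ∈ ℝ} |ρ(0,x)|.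 -/
open MeasureTheory Real ENNReal Set Function

/-!
Along a characteristic `s ↦ q(s, y)` the transport equation becomes the linear ODE
`f' = -2 ∂ₓu · f` for `f(s) = ρ(s, q(s, y))`. Since `-2 ∂ₓu ≤ 2M`, Gronwall's inequality applied
to `f²` gives `|f(t)| ≤ e^{2Mt} |f(0)| = e^{2Mt} |ρ(0, y)|`, and surjectivity of `q(t, ·)` means
every point `(t, x)` lies on such a characteristic.
-/

theorem abs_le_exp_mul_abs_of_hasDerivAt_mul_self {f c : ℝ → ℝ} {K a b : ℝ} (hab : a ≤ b)
    (hf : ∀ s ∈ Icc a b, HasDerivAt f (c s * f s) s) (hc : ∀ s ∈ Ico a b, c s ≤ K) :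
    |f b| ≤ exp (K * (b - a)) * |f a| := by
  have hsq : ∀ s ∈ Icc a b, HasDerivAt (fun s => f s ^ 2) (2 * c s * f s ^ 2) s := fun s hs =>
    ((hf s hs).pow 2).congr_deriv (by push_cast; ring)
  have hgronwall := le_gronwallBound_of_liminf_deriv_right_le (ε := 0) (δ := f a ^ 2) (K := 2 * K)
    (fun s hs => (hsq s hs).continuousAt.continuousWithinAt)
    (fun s hs _ hr => by
      simpa only [slope_def_field, div_eq_inv_mul] using
        (hsq s (Ico_subset_Icc_self hs)).hasDerivWithinAt.liminf_right_slope_le hr)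
    le_rfl
    (fun s hs => by nlinarith [hc s hs, sq_nonneg (f s)])
    b ⟨hab, le_rfl⟩
  rw [gronwallBound_ε0] at hgronwall
  refine abs_le_of_sq_le_sq ?_ (by positivity)
  calc f b ^ 2 ≤ f a ^ 2 * exp (2 * K * (b - a)) := hgronwall
    _ = (exp (K * (b - a)) * |f a|) ^ 2 := by
      rw [mul_pow, sq_abs, ← exp_nat_mul]; push_cast; ring_nf

theorem hasDerivAt_uncurry_comp {F : ℝ → ℝ → ℝ} {c : ℝ → ℝ} {c' s : ℝ}
    (hF : DifferentiableAt ℝ (uncurry F) (s, c s)) (hc : HasDerivAt c c' s) :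
    HasDerivAt (fun r => F r (c r)) (deriv (fun r => F r (c s)) s + c' * deriv (F s) (c s)) s := by
  obtain ⟨L, hL⟩ := hF
  have h₁ : HasDerivAt (fun r => F r (c s)) (L (1, 0)) s :=
    (hL.comp_hasDerivAt s ((hasDerivAt_id' s).prodMk (hasDerivAt_const s (c s))) :)
  have h₂ : HasDerivAt (F s) (L (0, 1)) (c s) :=
    (hL.comp_hasDerivAt (c s) ((hasDerivAt_const (c s) s).prodMk (hasDerivAt_id' (c s))) :)
  have hsplit : L (1, c') = L (1, 0) + c' * L (0, 1) := by
    rw [← smul_eq_mul, ← map_smul, ← map_add]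
    simp
  rw [h₁.deriv, h₂.deriv, ← hsplit]
  exact (hL.comp_hasDerivAt s ((hasDerivAt_id' s).prodMk hc) :)

theorem iSup_nnnorm_le_ofReal_mul_iSup_nnnorm {ι κ E F : Type*} [SeminormedAddGroup E]
    [SeminormedAddGroup F] {f : ι → E} {g : κ → F} {C : ℝ} (hC : 0 ≤ C)
    (h : ∀ i, ∃ j, ‖f i‖ ≤ C * ‖g j‖) :
    ⨆ i, (‖f i‖₊ : ℝ≥0∞) ≤ ENNReal.ofReal C * ⨆ j, (‖g j‖₊ : ℝ≥0∞) := by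
  refine iSup_le fun i => ?_
  obtain ⟨j, hj⟩ := h i
  calc (‖f i‖₊ : ℝ≥0∞) = ENNReal.ofReal ‖f i‖ := (ofReal_norm _).symm
    _ ≤ ENNReal.ofReal C * ENNReal.ofReal ‖g j‖ := by
      rw [← ENNReal.ofReal_mul hC]; exact ENNReal.ofReal_le_ofReal hj
    _ ≤ ENNReal.ofReal C * ⨆ j, (‖g j‖₊ : ℝ≥0∞) := by
      rw [ofReal_norm]; exact mul_le_mul_right (le_iSup (fun j => (‖g j‖₊ : ℝ≥0∞)) j) _

theorem stmt_11_general (T M : ℝ)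
    (u ρ q : ℝ → ℝ → ℝ)
    (hux : ∀ t ∈ Set.Ico (0 : ℝ) T, ∀ x : ℝ, deriv (u t) x ≥ -M)
    (hρ : ContDiff ℝ 1 (Function.uncurry ρ))
    (htransport : ∀ t ∈ Set.Ico (0 : ℝ) T, ∀ x : ℝ,
      deriv (fun s => ρ s x) t + u t x * deriv (ρ t) x
        + 2 * deriv (u t) x * ρ t x = 0)
    (hq : ContDiff ℝ 1 (Function.uncurry q))
    (hode : ∀ t ∈ Set.Ico (0 : ℝ) T, ∀ x : ℝ,
      deriv (fun s => q s x) t = u t (q t x))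
    (hq0 : ∀ x : ℝ, q 0 x = x)
    (hsurj : ∀ t ∈ Set.Ico (0 : ℝ) T, Function.Surjective (q t)) :
    ∀ t ∈ Set.Ico (0 : ℝ) T,
      (⨆ x : ℝ, (‖ρ t x‖₊ : ℝ≥0∞))
        ≤ ENNReal.ofReal (Real.exp (2 * M * t)) * ⨆ x : ℝ, (‖ρ 0 x‖₊ : ℝ≥0∞) := by
  rintro t ⟨ht0, htT⟩
  refine iSup_nnnorm_le_ofReal_mul_iSup_nnnorm (exp_pos _).le fun x => ?_
  obtain ⟨y, rfl⟩ := hsurj t ⟨ht0, htT⟩ x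
  have hcharacteristic : ∀ s ∈ Icc 0 t, HasDerivAt (fun s => ρ s (q s y))
      (-2 * deriv (u s) (q s y) * ρ s (q s y)) s := fun s hs => by
    have hsT : s ∈ Ico 0 T := ⟨hs.1, hs.2.trans_lt htT⟩
    have hq_s : HasDerivAt (fun r => q r y) (u s (q s y)) s := by
      rw [← hode s hsT y]
      exact (((hq.differentiable one_ne_zero) (s, y)).comp s
        (differentiableAt_id.prodMk (differentiableAt_const y))).hasDerivAt
    refine (hasDerivAt_uncurry_comp ((hρ.differentiable one_ne_zero) _) hq_s).congr_deriv ?_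
    linarith [htransport s hsT (q s y)]
  refine ⟨y, ?_⟩
  simpa [hq0, mul_comm (2 : ℝ) M] using abs_le_exp_mul_abs_of_hasDerivAt_mul_self ht0
    hcharacteristic fun s hs => by linarith [hux s ⟨hs.1, hs.2.trans htT⟩ (q s y)]

/-- The `L^∞` a priori estimate for `ρ`: if `∂ₓu ≥ −M` on `[0,T) × ℝ`, `ρ`
solves `∂ₜρ + u ∂ₓρ + 2 (∂ₓu) ρ = 0`, and `q` is the flow of `u` with `q(t,·)`
surjective for each `t`, then `sup_x |ρ(t,x)| ≤ e^{2Mt} sup_x |ρ(0,x)|`. -/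
theorem stmt_11 (T M : ℝ) (hT : 0 < T) (hM : 0 < M)
    (u ρ q : ℝ → ℝ → ℝ)
    (hu : ContDiff ℝ 1 (Function.uncurry u))
    (hux : ∀ t ∈ Set.Ico (0 : ℝ) T, ∀ x : ℝ, deriv (u t) x ≥ -M)
    (hρ : ContDiff ℝ 1 (Function.uncurry ρ))
    (htransport : ∀ t ∈ Set.Ico (0 : ℝ) T, ∀ x : ℝ,
      deriv (fun s => ρ s x) t + u t x * deriv (ρ t) x
        + 2 * deriv (u t) x * ρ t x = 0)
    (hq : ContDiff ℝ 1 (Function.uncurry q))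
    (hode : ∀ t ∈ Set.Ico (0 : ℝ) T, ∀ x : ℝ,
      deriv (fun s => q s x) t = u t (q t x))
    (hq0 : ∀ x : ℝ, q 0 x = x)
    (hsurj : ∀ t ∈ Set.Ico (0 : ℝ) T, Function.Surjective (q t)) :
    ∀ t ∈ Set.Ico (0 : ℝ) T,
      (⨆ x : ℝ, (‖ρ t x‖₊ : ℝ≥0∞))
        ≤ ENNReal.ofReal (Real.exp (2 * M * t)) * ⨆ x : ℝ, (‖ρ 0 x‖₊ : ℝ≥0∞) :=
  stmt_11_general T M u ρ q hux hρ htransport hq hode hq0 hsurj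
end

section
/- Let T > 0, M > 0, let u : [0,T) × ℝ → ℝ be continuously differentiable with ∂ₓu(t,x) ≥ −M for all (t,x) ∈ [0,T) × ℝ, and let ρ : [0,T) × ℝ → ℝ be continuously differentiable and satisfy ∂ₜρ + u ∂ₓρ + 2 (∂ₓu) ρ = 0 on [0,T) × ℝ, with ρ(0,·) square integrable. Let q : [0,T) × ℝ → ℝ be continuously differentiable with ∂ₜq(t,x) = u(t, q(t,x)), q(0,x) = x, and suppose that for each t ∈ [0,T) the map q(t,·) : ℝ → ℝ is a C¹ diffeomorphism of ℝ. Then for every t ∈ [0,T), ∫_ℝ ρ(t,x)² dx ≤ e^{3Mt} ∫_ℝ ρ(0,x)² dx. -/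
open MeasureTheory Real Set Function Filter

/-!
Along a characteristic `s ↦ q(s,x)` the equation for `ρ` becomes the linear ODE
`d/ds ρ(s,q) = -2 ∂ₓu(s,q) ρ(s,q)`, and differentiating the integral form
`q(t,x) = x + ∫₀ᵗ u(s,q(s,x)) ds` in `x` shows that `∂ₓq` solves `d/ds ∂ₓq = ∂ₓu(s,q) ∂ₓq`.
With `A(x) = ∫₀ᵗ ∂ₓu(s,q(s,x)) ds ≥ -Mt` this gives `ρ(t,q) = ρ(0,x) e^{-2A}` and `∂ₓq = e^A`,
so after the change of variables `y = q(t,x)` the integrand `ρ(t,y)²` becomes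
`e^A ρ(t,q)² = e^{-3A} ρ(0,x)² ≤ e^{3Mt} ρ(0,x)²`.
-/

namespace ContDiff

variable {f : ℝ → ℝ → ℝ}

theorem hasDerivAt_fst_fderiv (hf : ContDiff ℝ 1 (uncurry f)) (t x : ℝ) :
    HasDerivAt (fun s => f s x) (fderiv ℝ (uncurry f) (t, x) (1, 0)) t := by
  have hcurve : HasDerivAt (fun s : ℝ => (s, x)) ((1 : ℝ), (0 : ℝ)) t :=
    (hasDerivAt_id t).prodMk (hasDerivAt_const t x)
  exact (hf.differentiable one_ne_zero (t, x)).hasFDerivAt.comp_hasDerivAt t hcurve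

theorem hasDerivAt_snd_fderiv (hf : ContDiff ℝ 1 (uncurry f)) (t x : ℝ) :
    HasDerivAt (f t) (fderiv ℝ (uncurry f) (t, x) (0, 1)) x := by
  have hcurve : HasDerivAt (fun y : ℝ => (t, y)) ((0 : ℝ), (1 : ℝ)) x :=
    (hasDerivAt_const x t).prodMk (hasDerivAt_id x)
  exact (hf.differentiable one_ne_zero (t, x)).hasFDerivAt.comp_hasDerivAt x hcurve

theorem hasDerivAt_deriv_fst (hf : ContDiff ℝ 1 (uncurry f)) (t x : ℝ) :
    HasDerivAt (fun s => f s x) (deriv (fun s => f s x) t) t :=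
  (hf.hasDerivAt_fst_fderiv t x).differentiableAt.hasDerivAt

theorem hasDerivAt_deriv_snd (hf : ContDiff ℝ 1 (uncurry f)) (t x : ℝ) :
    HasDerivAt (f t) (deriv (f t) x) x :=
  (hf.hasDerivAt_snd_fderiv t x).differentiableAt.hasDerivAt

theorem continuous_deriv_snd (hf : ContDiff ℝ 1 (uncurry f)) :
    Continuous (uncurry fun t x => deriv (f t) x) := by
  simp only [fun t x => (hf.hasDerivAt_snd_fderiv t x).deriv]
  exact (hf.continuous_fderiv one_ne_zero).clm_apply continuous_const

theorem hasDerivAt_comp_curve (hf : ContDiff ℝ 1 (uncurry f)) {γ : ℝ → ℝ} {v t : ℝ}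
    (hγ : HasDerivAt γ v t) :
    HasDerivAt (fun s => f s (γ s))
      (deriv (fun s => f s (γ t)) t + v * deriv (f t) (γ t)) t := by
  have h := ((hf.differentiable one_ne_zero (t, γ t)).hasFDerivAt).comp_hasDerivAt t
    ((hasDerivAt_id t).prodMk hγ)
  have hsplit : ((1 : ℝ), v) = ((1 : ℝ), (0 : ℝ)) + v • ((0 : ℝ), (1 : ℝ)) := by simp
  rwa [hsplit, map_add, map_smul, ← (hf.hasDerivAt_fst_fderiv t (γ t)).deriv,
    ← (hf.hasDerivAt_snd_fderiv t (γ t)).deriv, smul_eq_mul] at h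

theorem hasDerivAt_intervalIntegral (hf : ContDiff ℝ 1 (uncurry f)) (a b x : ℝ) :
    HasDerivAt (fun y => ∫ s in a..b, f s y) (∫ s in a..b, deriv (f s) x) x := by
  obtain ⟨C, hC⟩ := (isCompact_uIcc.prod (isCompact_closedBall x 1)).exists_bound_of_continuousOn
    hf.continuous_deriv_snd.continuousOn
  have hcont : ∀ y, Continuous fun s => f s y := fun y =>
    hf.continuous.comp (continuous_id.prodMk continuous_const)
  refine (intervalIntegral.hasDerivAt_integral_of_dominated_loc_of_deriv_le
    (F := fun y s => f s y) (F' := fun y s => deriv (f s) y) (bound := fun _ => C)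
    (Metric.closedBall_mem_nhds x one_pos)
    (Eventually.of_forall fun y => (hcont y).aestronglyMeasurable)
    ((hcont x).intervalIntegrable _ _)
    (hf.continuous_deriv_snd.comp (continuous_id.prodMk continuous_const)).aestronglyMeasurable
    (ae_of_all _ fun s hs y hy => hC (s, y) ⟨uIoc_subset_uIcc hs, hy⟩)
    intervalIntegrable_const
    (ae_of_all _ fun s _ y _ => hf.hasDerivAt_deriv_snd s y)).2

end ContDiff

theorem eq_mul_exp_integral_of_hasDerivAt {g c : ℝ → ℝ} {a b : ℝ} (hab : a ≤ b)
    (hc : Continuous c) (hg : ∀ s ∈ Icc a b, HasDerivAt g (c s * g s) s) :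
    g b = g a * exp (∫ s in a..b, c s) := by
  set C : ℝ → ℝ := fun τ => ∫ s in a..τ, c s
  have hC : ∀ τ, HasDerivAt C (c τ) τ := fun τ =>
    hc.integral_hasStrictDerivAt a τ |>.hasDerivAt
  have hconst : ∀ s ∈ Icc a b, HasDerivAt (fun τ => g τ * exp (-C τ)) 0 s := by
    intro s hs
    exact ((hg s hs).mul (hC s).fun_neg.exp).congr_deriv (by ring)
  have key := constant_of_has_deriv_right_zero
    (fun s hs => (hconst s hs).continuousAt.continuousWithinAt)
    (fun s hs => (hconst s (Ico_subset_Icc_self hs)).hasDerivWithinAt) b ⟨hab, le_rfl⟩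
  simp only [C, intervalIntegral.integral_same, neg_zero, exp_zero, mul_one] at key
  rw [← key, mul_assoc, ← exp_add, neg_add_cancel, exp_zero, mul_one]

section Flow

variable {T : ℝ} {u q : ℝ → ℝ → ℝ}

theorem continuous_along_flow {f : ℝ → ℝ → ℝ} (hf : Continuous (uncurry f))
    (hq : Continuous (uncurry q)) (x : ℝ) : Continuous fun s => f s (q s x) :=
  hf.comp (continuous_id.prodMk (hq.comp (continuous_id.prodMk continuous_const)))

theorem hasDerivAt_flow (hq : ContDiff ℝ 1 (uncurry q))
    (hode : ∀ t ∈ Ico (0 : ℝ) T, ∀ x : ℝ, deriv (fun s => q s x) t = u t (q t x))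
    {t : ℝ} (ht : t ∈ Ico (0 : ℝ) T) (x : ℝ) :
    HasDerivAt (fun s => q s x) (u t (q t x)) t :=
  hode t ht x ▸ hq.hasDerivAt_deriv_fst t x

theorem flow_eq_add_integral (hu : Continuous (uncurry u)) (hq : ContDiff ℝ 1 (uncurry q))
    (hode : ∀ t ∈ Ico (0 : ℝ) T, ∀ x : ℝ, deriv (fun s => q s x) t = u t (q t x))
    (hq0 : ∀ x : ℝ, q 0 x = x) {t : ℝ} (ht : t ∈ Ico (0 : ℝ) T) (x : ℝ) :
    q t x = x + ∫ s in (0 : ℝ)..t, u s (q s x) := by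
  rw [intervalIntegral.integral_eq_sub_of_hasDerivAt (f := fun s => q s x), hq0]
  · ring
  · rw [uIcc_of_le ht.1]
    exact fun s hs => hasDerivAt_flow hq hode ⟨hs.1, hs.2.trans_lt ht.2⟩ x
  · exact (continuous_along_flow hu hq.continuous x).intervalIntegrable _ _

theorem deriv_flow_eq_exp (hu : ContDiff ℝ 1 (uncurry u)) (hq : ContDiff ℝ 1 (uncurry q))
    (hode : ∀ t ∈ Ico (0 : ℝ) T, ∀ x : ℝ, deriv (fun s => q s x) t = u t (q t x))
    (hq0 : ∀ x : ℝ, q 0 x = x) {t : ℝ} (ht : t ∈ Ico (0 : ℝ) T) (x : ℝ) :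
    deriv (q t) x = exp (∫ s in (0 : ℝ)..t, deriv (u s) (q s x)) := by
  set a : ℝ → ℝ := fun s => deriv (u s) (q s x)
  have ha : Continuous a := continuous_along_flow hu.continuous_deriv_snd hq.continuous x
  have hF : ContDiff ℝ 1 (uncurry fun s y => u s (q s y)) := hu.comp (contDiff_fst.prodMk hq)
  have hD : Continuous fun s => deriv (q s) x :=
    hq.continuous_deriv_snd.comp (continuous_id.prodMk continuous_const)
  set R : ℝ → ℝ := fun τ => 1 + ∫ s in (0 : ℝ)..τ, a s * deriv (q s) x
  -- `q` is only `C¹`, so `∂ₓq` is reached through the integral form of the flow rather than by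
  -- differentiating the ODE in `x`.
  have hqR : ∀ τ ∈ Icc (0 : ℝ) t, deriv (q τ) x = R τ := by
    intro τ hτ
    have hint : q τ = fun y => y + ∫ s in (0 : ℝ)..τ, u s (q s y) :=
      funext (flow_eq_add_integral hu.continuous hq hode hq0 ⟨hτ.1, hτ.2.trans_lt ht.2⟩)
    have hchain : ∀ s, deriv (fun y => u s (q s y)) x = a s * deriv (q s) x := fun s =>
      ((hu.hasDerivAt_deriv_snd s (q s x)).comp x (hq.hasDerivAt_deriv_snd s x)).deriv
    rw [hint, ((hasDerivAt_id' x).fun_add (hF.hasDerivAt_intervalIntegral 0 τ x)).deriv]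
    simp only [hchain, R]
  have hR : ∀ τ ∈ Icc (0 : ℝ) t, HasDerivAt R (a τ * R τ) τ := fun τ hτ =>
    hqR τ hτ ▸ ((ha.mul hD).integral_hasStrictDerivAt 0 τ).hasDerivAt.const_add 1
  rw [hqR t ⟨ht.1, le_rfl⟩, eq_mul_exp_integral_of_hasDerivAt ht.1 ha hR]
  have hR0 : R 0 = 1 := by simp [R]
  rw [hR0, one_mul]

theorem transport_along_flow {ρ : ℝ → ℝ → ℝ} (hu : ContDiff ℝ 1 (uncurry u))
    (hρ : ContDiff ℝ 1 (uncurry ρ)) (hq : ContDiff ℝ 1 (uncurry q))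
    (htransport : ∀ t ∈ Ico (0 : ℝ) T, ∀ x : ℝ,
      deriv (fun s => ρ s x) t + u t x * deriv (ρ t) x + 2 * deriv (u t) x * ρ t x = 0)
    (hode : ∀ t ∈ Ico (0 : ℝ) T, ∀ x : ℝ, deriv (fun s => q s x) t = u t (q t x))
    (hq0 : ∀ x : ℝ, q 0 x = x) {t : ℝ} (ht : t ∈ Ico (0 : ℝ) T) (x : ℝ) :
    ρ t (q t x) = ρ 0 x * exp (-2 * ∫ s in (0 : ℝ)..t, deriv (u s) (q s x)) := by
  have hρq : ∀ s ∈ Icc (0 : ℝ) t, HasDerivAt (fun s => ρ s (q s x))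
      (-2 * deriv (u s) (q s x) * ρ s (q s x)) s := by
    intro s hs
    have hsT : s ∈ Ico (0 : ℝ) T := ⟨hs.1, hs.2.trans_lt ht.2⟩
    exact (hρ.hasDerivAt_comp_curve (hasDerivAt_flow hq hode hsT x)).congr_deriv
      (by linarith [htransport s hsT (q s x)])
  rw [eq_mul_exp_integral_of_hasDerivAt ht.1
    ((continuous_along_flow hu.continuous_deriv_snd hq.continuous x).const_mul _) hρq,
    intervalIntegral.integral_const_mul, hq0]

end Flow

theorem stmt_12_general (T M : ℝ)
    (u ρ q : ℝ → ℝ → ℝ)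
    (hu : ContDiff ℝ 1 (Function.uncurry u))
    (hux : ∀ t ∈ Set.Ico (0 : ℝ) T, ∀ x : ℝ, deriv (u t) x ≥ -M)
    (hρ : ContDiff ℝ 1 (Function.uncurry ρ))
    (htransport : ∀ t ∈ Set.Ico (0 : ℝ) T, ∀ x : ℝ,
      deriv (fun s => ρ s x) t + u t x * deriv (ρ t) x
        + 2 * deriv (u t) x * ρ t x = 0)
    (hρ0 : Integrable (fun x => (ρ 0 x) ^ 2))
    (hq : ContDiff ℝ 1 (Function.uncurry q))
    (hode : ∀ t ∈ Set.Ico (0 : ℝ) T, ∀ x : ℝ,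
      deriv (fun s => q s x) t = u t (q t x))
    (hq0 : ∀ x : ℝ, q 0 x = x)
    (hdiffeo : ∀ t ∈ Set.Ico (0 : ℝ) T,
      Function.Bijective (q t) ∧ ContDiff ℝ 1 (Function.invFun (q t))) :
    ∀ t ∈ Set.Ico (0 : ℝ) T,
      ∫ x, (ρ t x) ^ 2 ≤ Real.exp (3 * M * t) * ∫ x, (ρ 0 x) ^ 2 := by
  intro t ht
  have hbij := (hdiffeo t ht).1
  set A : ℝ → ℝ := fun x => ∫ s in (0 : ℝ)..t, deriv (u s) (q s x)
  have hA : ∀ x, -(M * t) ≤ A x := fun x => by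
    have := intervalIntegral.integral_mono_on ht.1 (intervalIntegrable_const (μ := volume))
      ((continuous_along_flow hu.continuous_deriv_snd hq.continuous x).intervalIntegrable _ _)
      fun s hs => hux s ⟨hs.1, hs.2.trans_lt ht.2⟩ (q s x)
    simp only [intervalIntegral.integral_const, smul_eq_mul, sub_zero] at this
    linarith
  have hcov : ∫ y, ρ t y ^ 2 = ∫ x, |deriv (q t) x| * ρ t (q t x) ^ 2 := by
    simpa [hbij.surjective.range_eq] using integral_image_eq_integral_abs_deriv_smul
      MeasurableSet.univ (fun x _ => (hq.hasDerivAt_deriv_snd t x).hasDerivWithinAt)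
      hbij.injective.injOn fun y => ρ t y ^ 2
  have hpt : ∀ x, |deriv (q t) x| * ρ t (q t x) ^ 2 = exp (-(3 * A x)) * ρ 0 x ^ 2 := by
    intro x
    rw [deriv_flow_eq_exp hu hq hode hq0 ht, transport_along_flow hu hρ hq htransport hode hq0 ht,
      abs_of_pos (exp_pos _), mul_pow, ← exp_nat_mul, mul_left_comm, ← exp_add, mul_comm]
    congr 2
    push_cast
    ring
  rw [hcov, ← integral_const_mul]
  refine integral_mono_of_nonneg (ae_of_all _ fun x => by positivity) (hρ0.const_mul _)
    (ae_of_all _ fun x => (hpt x).trans_le ?_)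
  exact mul_le_mul_of_nonneg_right (exp_le_exp.2 (by linarith [hA x])) (sq_nonneg _)

/-- The `L²` a priori estimate for `ρ`: if `∂ₓu ≥ −M` on `[0,T) × ℝ`, `ρ`
solves `∂ₜρ + u ∂ₓρ + 2 (∂ₓu) ρ = 0` with `ρ(0,·)` square integrable, and `q`
is the flow of `u` with `q(t,·)` a `C¹` diffeomorphism of `ℝ` for each `t`,
then `∫ ρ(t)² ≤ e^{3Mt} ∫ ρ(0)²`. -/
theorem stmt_12 (T M : ℝ) (hT : 0 < T) (hM : 0 < M)
    (u ρ q : ℝ → ℝ → ℝ)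
    (hu : ContDiff ℝ 1 (Function.uncurry u))
    (hux : ∀ t ∈ Set.Ico (0 : ℝ) T, ∀ x : ℝ, deriv (u t) x ≥ -M)
    (hρ : ContDiff ℝ 1 (Function.uncurry ρ))
    (htransport : ∀ t ∈ Set.Ico (0 : ℝ) T, ∀ x : ℝ,
      deriv (fun s => ρ s x) t + u t x * deriv (ρ t) x
        + 2 * deriv (u t) x * ρ t x = 0)
    (hρ0 : Integrable (fun x => (ρ 0 x) ^ 2))
    (hq : ContDiff ℝ 1 (Function.uncurry q))
    (hode : ∀ t ∈ Set.Ico (0 : ℝ) T, ∀ x : ℝ,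
      deriv (fun s => q s x) t = u t (q t x))
    (hq0 : ∀ x : ℝ, q 0 x = x)
    (hdiffeo : ∀ t ∈ Set.Ico (0 : ℝ) T,
      Function.Bijective (q t) ∧ ContDiff ℝ 1 (Function.invFun (q t))) :
    ∀ t ∈ Set.Ico (0 : ℝ) T,
      ∫ x, (ρ t x) ^ 2 ≤ Real.exp (3 * M * t) * ∫ x, (ρ 0 x) ^ 2 :=
  stmt_12_general T M u ρ q hu hux hρ htransport hρ0 hq hode hq0 hdiffeo
end

section
/- Let T > 0, K > 0 and let m : [0,T) → ℝ be differentiable with m'(t) ≤ −m(t)² + K² for all t ∈ [0,T). If m(0) < −K, then for all t ∈ [0,T) one has m(t) ≤ m(0) < −K and ( (m(0)+K)/(m(0)−K) )·e^{2Kt} − 1 ≤ 2K / ( m(t) − K ) ≤ 0. -/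
/-!
Since `m' ≤ K² - m² < 0` wherever `m = m(0) < -K`, the constant `m(0)` is an upper barrier,
so `m` stays at most `m(0)`. Away from `m = K`, the Riccati inequality says exactly that
`e^{-2Kt} (m + K)/(m - K)` is nondecreasing; comparing its values at `0` and `t` and using
`(m + K)/(m - K) = 1 + 2K/(m - K)` gives the lower bound.
-/

open Real Set

theorem le_apply_left_of_deriv_le_of_neg {a b : ℝ} {m m' F : ℝ → ℝ}
    (hderiv : ∀ t ∈ Ico a b, HasDerivWithinAt m (m' t) (Ico a b) t)
    (hineq : ∀ t ∈ Ico a b, m' t ≤ F (m t)) (hF : F (m a) < 0) :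
    ∀ t ∈ Ico a b, m t ≤ m a := by
  intro t ht
  have hsub : Icc a t ⊆ Ico a b := Icc_subset_Ico_right ht.2
  refine image_le_of_deriv_right_lt_deriv_boundary (B := fun _ ↦ m a) (B' := 0)
    (fun x hx ↦ (hderiv x (hsub hx)).continuousWithinAt.mono hsub)
    (fun x hx ↦ ?_) le_rfl (fun _ ↦ hasDerivAt_const _ _)
    (fun x hx hxa ↦ (hineq x (hsub (Ico_subset_Icc_self hx))).trans_lt (hxa ▸ hF))
    (right_mem_Icc.2 ht.1)
  have hxI := hsub (Ico_subset_Icc_self hx)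
  exact (hderiv x hxI).mono_of_mem_nhdsWithin (Ico_mem_nhdsGE_of_mem hxI)

theorem monotoneOn_exp_mul_div_of_riccati {D : Set ℝ} (hD : Convex ℝ D) {K : ℝ} (hK : 0 ≤ K)
    {m m' : ℝ → ℝ} (hderiv : ∀ t ∈ D, HasDerivWithinAt m (m' t) D t)
    (hineq : ∀ t ∈ D, m' t ≤ -(m t) ^ 2 + K ^ 2) (hne : ∀ t ∈ D, m t ≠ K) :
    MonotoneOn (fun t ↦ exp (-(2 * K * t)) * ((m t + K) / (m t - K))) D := by
  have hderiv_g : ∀ t ∈ D,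
      HasDerivWithinAt (fun t ↦ exp (-(2 * K * t)) * ((m t + K) / (m t - K)))
        (exp (-(2 * K * t)) * (2 * K) * (-(m t) ^ 2 + K ^ 2 - m' t) / (m t - K) ^ 2) D t := by
    intro t ht
    have hsub : m t - K ≠ 0 := sub_ne_zero.2 (hne t ht)
    have hexp :
        HasDerivWithinAt (fun t ↦ exp (-(2 * K * t))) (exp (-(2 * K * t)) * -(2 * K)) D t :=
      (((hasDerivAt_id t).const_mul (2 * K)).neg.exp.hasDerivWithinAt).congr_deriv (by simp)
    have hratio := ((hderiv t ht).add_const K).div ((hderiv t ht).sub_const K) hsub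
    refine (hexp.mul hratio).congr_deriv ?_
    simp only [Pi.div_apply]
    field_simp
    ring
  refine monotoneOn_of_hasDerivWithinAt_nonneg hD
    (fun t ht ↦ (hderiv_g t ht).continuousWithinAt)
    (fun t ht ↦ (hderiv_g t (interior_subset ht)).mono interior_subset) (fun t ht ↦ ?_)
  have := hineq t (interior_subset ht)
  have := exp_pos (-(2 * K * t))
  positivity

/-- Riccati comparison inequality: if `m : [0,T) → ℝ` is differentiable with
`m' ≤ −m² + K²` and `m(0) < −K`, then `m(t) ≤ m(0) < −K` and
`((m(0)+K)/(m(0)−K)) e^{2Kt} − 1 ≤ 2K/(m(t)−K) ≤ 0` for all `t ∈ [0,T)`. -/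
theorem stmt_16 (T K : ℝ) (hT : 0 < T) (hK : 0 < K)
    (m m' : ℝ → ℝ)
    (hderiv : ∀ t ∈ Set.Ico (0 : ℝ) T, HasDerivWithinAt m (m' t) (Set.Ico (0 : ℝ) T) t)
    (hineq : ∀ t ∈ Set.Ico (0 : ℝ) T, m' t ≤ -(m t) ^ 2 + K ^ 2)
    (h0 : m 0 < -K) :
    ∀ t ∈ Set.Ico (0 : ℝ) T,
      m t ≤ m 0 ∧
      ((m 0 + K) / (m 0 - K)) * Real.exp (2 * K * t) - 1 ≤ 2 * K / (m t - K) ∧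
      2 * K / (m t - K) ≤ 0 := by
  have hle : ∀ t ∈ Ico 0 T, m t ≤ m 0 :=
    le_apply_left_of_deriv_le_of_neg (F := fun y ↦ -y ^ 2 + K ^ 2) hderiv hineq (by nlinarith)
  have hlt : ∀ t ∈ Ico 0 T, m t < -K := fun t ht ↦ (hle t ht).trans_lt h0
  have hmono := monotoneOn_exp_mul_div_of_riccati (convex_Ico 0 T) hK.le hderiv hineq
    fun t ht ↦ ((hlt t ht).trans (by linarith)).ne
  intro t ht
  have hsub : m t - K ≠ 0 := (by linarith [hlt t ht] : m t - K < 0).ne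
  have hratio : (m 0 + K) / (m 0 - K) * exp (2 * K * t) ≤ (m t + K) / (m t - K) := by
    have := mul_le_mul_of_nonneg_right (hmono ⟨le_rfl, hT⟩ ht ht.1) (exp_pos (2 * K * t)).le
    simpa only [mul_zero, neg_zero, exp_zero, one_mul, mul_right_comm _ _ (exp (2 * K * t)),
      ← exp_add, neg_add_cancel] using this
  refine ⟨hle t ht, ?_, div_nonpos_of_nonneg_of_nonpos (by linarith) (by linarith [hlt t ht])⟩
  calc (m 0 + K) / (m 0 - K) * exp (2 * K * t) - 1 ≤ (m t + K) / (m t - K) - 1 := by linarith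
    _ = 2 * K / (m t - K) := by field_simp; ring
end

section
/- Let T > 0 be finite, K ≥ 0, and let m : [0,T) → ℝ be differentiable with |m'(t) + m(t)²| ≤ K for all t ∈ [0,T), and suppose m(t) → −∞ as t → T⁻. Then lim_{t → T⁻} m(t)·(T − t) = −1. -/
/-!
Along the blow-up, `w = 1/m` satisfies `w' - 1 = -(m' + m²)/m²`, which is at most `K/m² → 0` in
absolute value, while `w → 0` at `T`. Integrating from `t` up to `T` gives
`1/m(t) = -(T - t) + o(T - t)`, i.e. `m(t) ~ -1/(T - t)`.
-/

open Set Filter Topology Asymptotics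

theorem norm_sub_le_mul_of_tendsto_nhdsLT {E : Type*} [NormedAddCommGroup E] [NormedSpace ℝ E]
    {g g' : ℝ → E} {a b C : ℝ} {L : E}
    (hg : ∀ t ∈ Ico a b, HasDerivWithinAt g (g' t) (Ico a b) t)
    (hg' : ∀ t ∈ Ico a b, ‖g' t‖ ≤ C) (hL : Tendsto g (𝓝[<] b) (𝓝 L))
    {t : ℝ} (ht : t ∈ Ico a b) : ‖L - g t‖ ≤ C * (b - t) := by
  have hnear : ∀ᶠ s in 𝓝[<] b, ‖g s - g t‖ ≤ C * (s - t) := by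
    filter_upwards [Ioo_mem_nhdsLT ht.2] with s hs
    have hs' : s ∈ Ico a b := ⟨ht.1.trans hs.1.le, hs.2⟩
    simpa [Real.norm_eq_abs, abs_of_pos (sub_pos.2 hs.1)] using
      (convex_Ico a b).norm_image_sub_le_of_norm_hasDerivWithin_le hg hg' ht hs'
  refine le_of_tendsto_of_tendsto (hL.sub_const (g t)).norm ?_ hnear
  exact (Continuous.tendsto (by fun_prop) b).mono_left nhdsWithin_le_nhds

theorem abs_neg_div_sq_sub_one {x x' : ℝ} (hx : x ≠ 0) :
    |-x' / x ^ 2 - 1| = |x' + x ^ 2| / x ^ 2 := by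
  rw [show -x' / x ^ 2 - 1 = -((x' + x ^ 2) / x ^ 2) by field_simp; ring, abs_neg, abs_div, abs_sq]

theorem isEquivalent_inv_of_riccati_blowup {T K : ℝ} (hT : 0 < T) {m m' : ℝ → ℝ}
    (hderiv : ∀ t ∈ Ico (0 : ℝ) T, HasDerivWithinAt m (m' t) (Ico (0 : ℝ) T) t)
    (hbound : ∀ t ∈ Ico (0 : ℝ) T, |m' t + m t ^ 2| ≤ K)
    (hblow : Tendsto m (𝓝[<] T) atBot) :
    (fun t => (m t)⁻¹) ~[𝓝[<] T] fun t => -(T - t) := by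
  refine IsLittleO.congr_left (f₁ := fun t => (m t)⁻¹ + (T - t)) ?_
    fun t => by simp only [Pi.sub_apply]; ring
  refine isLittleO_neg_right.2 (IsLittleO.of_bound fun ε hε => ?_)
  obtain ⟨a, ha, hlarge⟩ := mem_nhdsLT_iff_exists_Ioo_subset.1
    ((hblow.eventually (eventually_lt_atBot 0)).and
      ((hblow.atBot_mul_atBot₀ hblow).eventually (eventually_ge_atTop (K / ε))))
  obtain ⟨t₀, ht₀, ht₀T⟩ := exists_between (max_lt ha hT)
  have hsub : Ico t₀ T ⊆ Ico 0 T := fun t ht =>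
    ⟨(le_max_right _ _).trans (ht₀.le.trans ht.1), ht.2⟩
  have hlarge' : ∀ t ∈ Ico t₀ T, m t < 0 ∧ K / ε ≤ m t * m t := fun t ht =>
    hlarge ⟨(le_max_left _ _).trans_lt (ht₀.trans_le ht.1), ht.2⟩
  have hderiv' : ∀ t ∈ Ico t₀ T, HasDerivWithinAt (fun t => (m t)⁻¹ - t)
      (-m' t / m t ^ 2 - 1) (Ico t₀ T) t := fun t ht =>
    (((hderiv t (hsub ht)).mono hsub).inv (hlarge' t ht).1.ne).sub (hasDerivWithinAt_id t _)
  have hbound' : ∀ t ∈ Ico t₀ T, ‖-m' t / m t ^ 2 - 1‖ ≤ ε := by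
    intro t ht
    obtain ⟨hneg, hsq⟩ := hlarge' t ht
    rw [Real.norm_eq_abs, abs_neg_div_sq_sub_one hneg.ne, div_le_iff₀ (sq_pos_of_neg hneg)]
    calc |m' t + m t ^ 2| ≤ K := hbound t (hsub ht)
      _ ≤ ε * m t ^ 2 := by rw [sq]; exact (div_le_iff₀' hε).1 hsq
  have hlim : Tendsto (fun t => (m t)⁻¹ - t) (𝓝[<] T) (𝓝 (-T)) := by
    simpa using hblow.inv_tendsto_atBot.sub (tendsto_nhdsWithin_of_tendsto_nhds tendsto_id)
  filter_upwards [Ioo_mem_nhdsLT ht₀T] with t ht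
  have h := norm_sub_le_mul_of_tendsto_nhdsLT hderiv' hbound' hlim (Ioo_subset_Ico_self ht)
  rw [Real.norm_of_nonneg (sub_nonneg.2 ht.2.le)]
  rwa [show -T - ((m t)⁻¹ - t) = -((m t)⁻¹ + (T - t)) by ring, norm_neg] at h

theorem stmt_19_general (T K : ℝ) (hT : 0 < T)
    (m m' : ℝ → ℝ)
    (hderiv : ∀ t ∈ Set.Ico (0 : ℝ) T, HasDerivWithinAt m (m' t) (Set.Ico (0 : ℝ) T) t)
    (hbound : ∀ t ∈ Set.Ico (0 : ℝ) T, |m' t + (m t) ^ 2| ≤ K)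
    (hblow : Tendsto m (nhdsWithin T (Set.Iio T)) atBot) :
    Tendsto (fun t => m t * (T - t)) (nhdsWithin T (Set.Iio T)) (nhds (-1)) := by
  have hequiv : (fun t => m t * (T - t)) ~[𝓝[<] T] fun t => (-(T - t))⁻¹ * (T - t) := by
    simpa only [Pi.inv_def, Pi.mul_def, inv_inv] using
      (isEquivalent_inv_of_riccati_blowup hT hderiv hbound hblow).inv.mul
        (IsEquivalent.refl (u := fun t => T - t))
  refine hequiv.symm.tendsto_nhds (tendsto_const_nhds.congr' ?_)
  filter_upwards [self_mem_nhdsWithin] with t (ht : t < T)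
  field_simp [(sub_pos.2 ht).ne']

/-- Exact blow-up rate: if `m : [0,T) → ℝ` is differentiable with
`|m' + m²| ≤ K` and `m(t) → −∞` as `t → T⁻`, then `m(t)·(T − t) → −1`
as `t → T⁻`. -/
theorem stmt_19 (T K : ℝ) (hT : 0 < T) (hK : 0 ≤ K)
    (m m' : ℝ → ℝ)
    (hderiv : ∀ t ∈ Set.Ico (0 : ℝ) T, HasDerivWithinAt m (m' t) (Set.Ico (0 : ℝ) T) t)
    (hbound : ∀ t ∈ Set.Ico (0 : ℝ) T, |m' t + (m t) ^ 2| ≤ K)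
    (hblow : Tendsto m (nhdsWithin T (Set.Iio T)) atBot) :
    Tendsto (fun t => m t * (T - t)) (nhdsWithin T (Set.Iio T)) (nhds (-1)) :=
  stmt_19_general T K hT m m' hderiv hbound hblow
end
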